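/- arXiv:1009.0109 — 3 statements merged into one kernel-verified Lean document; each statement's English description precedes it below -/
import Mathlib

section
/- Let h ∈ M¹(𝒫) and define A_t := ∫₀ᵗ h_s ds for t ∈ [0,T]. If the process (A_t)_{t∈[0,T]} has stationary and independent increments under Ê, then, setting c := Ê(A_T)/T, one has Ê(A_t − A_s) = −Ê(−(A_t − A_s)) = c(t−s) for all 0 ≤ s ≤ t ≤ T; in particular the upper mean Ê(A_T)/T and the lower mean −Ê(−A_T)/T coincide. -/
open MeasureTheory Filter
open scoped ENNReal

noncomputable section

variable {Ω : Type*} [MeasurableSpace Ω]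

/-- The sublinear expectation `Ê(ξ) = sup_{P ∈ 𝔓} E_P[ξ]` associated with a family `𝔓`
of probability measures. -/
def sublinearE (𝔓 : Set (Measure Ω)) (ξ : Ω → ℝ) : ℝ :=
  ⨆ P : 𝔓, ∫ ω, ξ ω ∂(P : Measure Ω)

/-- The `M¹` norm `‖η‖_{M¹} = sup_{P ∈ 𝔓} E_P[∫₀ᵀ |η_t| dt]` of a process
`η : [0,T] × Ω → ℝ` (valued in `ℝ≥0∞`). -/
def M1norm (𝔓 : Set (Measure Ω)) (T : ℝ) (η : ℝ → Ω → ℝ) : ℝ≥0∞ :=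
  ⨆ P : 𝔓, ∫⁻ ω, (∫⁻ t in Set.Ioc (0:ℝ) T, ENNReal.ofReal |η t ω|) ∂(P : Measure Ω)

/-- A step process: `η_t(ω) = Σ_{j<N} ξ_j(ω) 1_{(t_j, t_{j+1}]}(t)` for a partition
`0 = t_0 < ⋯ < t_N = T` and bounded measurable `ξ_j`. -/
def IsStepProcess (T : ℝ) (η : ℝ → Ω → ℝ) : Prop :=
  ∃ (N : ℕ) (t : Fin (N + 1) → ℝ) (ξ : Fin N → Ω → ℝ),
    t 0 = 0 ∧ t (Fin.last N) = T ∧ StrictMono t ∧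
    (∀ j, Measurable (ξ j)) ∧ (∀ j, ∃ C, ∀ ω, |ξ j ω| ≤ C) ∧
    ∀ s ω, η s ω =
      ∑ j, ξ j ω * Set.indicator (Set.Ioc (t j.castSucc) (t j.succ)) (fun _ => (1:ℝ)) s

/-- `η ∈ M¹(𝔓)`: a jointly measurable process with finite `M¹` norm which is the
`M¹`-limit of step processes. -/
def MemM1 (𝔓 : Set (Measure Ω)) (T : ℝ) (η : ℝ → Ω → ℝ) : Prop :=
  Measurable (Function.uncurry η) ∧ M1norm 𝔓 T η < ⊤ ∧
    ∀ δ : ℝ≥0∞, 0 < δ → ∃ ζ, IsStepProcess T ζ ∧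
      M1norm 𝔓 T (fun t ω => η t ω - ζ t ω) < δ

/-- The class `C_{l,Lip}` of locally Lipschitz functions with polynomial growth of the
Lipschitz constant. -/
def CLLip {E : Type*} [NormedAddCommGroup E] (φ : E → ℝ) : Prop :=
  ∃ (C : ℝ) (k : ℕ), ∀ x y, |φ x - φ y| ≤ C * (1 + ‖x‖ ^ k + ‖y‖ ^ k) * ‖x - y‖

/-- `Y` is independent of `X` under the sublinear expectation associated with `𝔓`:
`Ê[φ(X,Y)] = Ê[ψ(X)]` with `ψ(x) = Ê[φ(x,Y)]`, for all `φ ∈ C_{l,Lip}` for which the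
relevant random variables are integrable under every `P ∈ 𝔓`. -/
def IndepOf (𝔓 : Set (Measure Ω)) {m n : ℕ}
    (Y : Ω → (Fin n → ℝ)) (X : Ω → (Fin m → ℝ)) : Prop :=
  ∀ φ : (Fin m → ℝ) × (Fin n → ℝ) → ℝ, CLLip φ →
    (∀ P ∈ 𝔓, Integrable (fun ω => φ (X ω, Y ω)) P) →
    (∀ x : Fin m → ℝ, ∀ P ∈ 𝔓, Integrable (fun ω => φ (x, Y ω)) P) →
    (∀ P ∈ 𝔓, Integrable (fun ω => sublinearE 𝔓 (fun ω' => φ (X ω, Y ω'))) P) →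
    sublinearE 𝔓 (fun ω => φ (X ω, Y ω)) =
      sublinearE 𝔓 (fun ω => sublinearE 𝔓 (fun ω' => φ (X ω, Y ω')))

/-- `(X_t)_{t ∈ [0,T]}` has independent increments under `Ê`: for all
`0 ≤ s_0 ≤ ⋯ ≤ s_m ≤ t_0 ≤ ⋯ ≤ t_n ≤ T`, the vector of `t`-increments is independent of
the vector of `s`-increments. -/
def HasIndepIncrements (𝔓 : Set (Measure Ω)) (T : ℝ) (X : ℝ → Ω → ℝ) : Prop :=
  ∀ (m n : ℕ) (s : Fin (m + 1) → ℝ) (t : Fin (n + 1) → ℝ),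
    Monotone s → Monotone t → 0 ≤ s 0 → s (Fin.last m) ≤ t 0 → t (Fin.last n) ≤ T →
    IndepOf 𝔓 (fun ω i => X (t i.succ) ω - X (t i.castSucc) ω)
              (fun ω i => X (s i.succ) ω - X (s i.castSucc) ω)

/-- `ξ` and `ζ` are identically distributed under `Ê`: `Ê[φ(ξ)] = Ê[φ(ζ)]` for every
`φ ∈ C_{l,Lip}` for which both sides are defined. -/
def IdentDistribSub (𝔓 : Set (Measure Ω)) (ξ ζ : Ω → ℝ) : Prop :=
  ∀ φ : ℝ → ℝ, CLLip φ →
    (∀ P ∈ 𝔓, Integrable (fun ω => φ (ξ ω)) P) →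
    (∀ P ∈ 𝔓, Integrable (fun ω => φ (ζ ω)) P) →
    sublinearE 𝔓 (fun ω => φ (ξ ω)) = sublinearE 𝔓 (fun ω => φ (ζ ω))

/-- `(X_t)_{t ∈ [0,T]}` has stationary increments: `X_t − X_s` is identically distributed
as `X_{t−s}` for all `0 ≤ s ≤ t ≤ T`. -/
def HasStationaryIncrements (𝔓 : Set (Measure Ω)) (T : ℝ) (X : ℝ → Ω → ℝ) : Prop :=
  ∀ s t : ℝ, 0 ≤ s → s ≤ t → t ≤ T →
    IdentDistribSub 𝔓 (fun ω => X t ω - X s ω) (X (t - s))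


set_option linter.unusedSectionVars false
set_option linter.unusedVariables false

namespace SKW


variable {𝔓 : Set (Measure Ω)}

lemma sublinearE_le (h𝔓 : 𝔓.Nonempty) {ξ : Ω → ℝ} {b : ℝ}
    (hb : ∀ P ∈ 𝔓, ∫ ω, ξ ω ∂P ≤ b) : sublinearE 𝔓 ξ ≤ b := by
  haveI : Nonempty ↥𝔓 := h𝔓.to_subtype
  exact ciSup_le fun P => hb P P.2

lemma bddAbove_of_le {ξ : Ω → ℝ} {b : ℝ} (hb : ∀ P ∈ 𝔓, ∫ ω, ξ ω ∂P ≤ b) :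
    BddAbove (Set.range fun P : 𝔓 => ∫ ω, ξ ω ∂(P : Measure Ω)) := by
  refine ⟨b, ?_⟩
  rintro x ⟨Q, rfl⟩
  exact hb Q Q.2

lemma le_sublinearE {ξ : Ω → ℝ} {b : ℝ}
    (hb : ∀ P ∈ 𝔓, ∫ ω, ξ ω ∂P ≤ b) {P : Measure Ω} (hP : P ∈ 𝔓) :
    ∫ ω, ξ ω ∂P ≤ sublinearE 𝔓 ξ :=
  le_ciSup (bddAbove_of_le hb) (⟨P, hP⟩ : ↥𝔓)

lemma abs_sublinearE_le (h𝔓 : 𝔓.Nonempty) {ξ : Ω → ℝ} {b : ℝ}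
    (hb : ∀ P ∈ 𝔓, |∫ ω, ξ ω ∂P| ≤ b) : |sublinearE 𝔓 ξ| ≤ b := by
  obtain ⟨P, hP⟩ := h𝔓
  rw [abs_le]
  exact ⟨le_trans (abs_le.1 (hb P hP)).1 (le_sublinearE (fun Q hQ => (abs_le.1 (hb Q hQ)).2) hP),
    sublinearE_le ⟨P, hP⟩ fun Q hQ => (abs_le.1 (hb Q hQ)).2⟩

lemma sublinearE_congr {ξ ζ : Ω → ℝ}
    (hb : ∀ P ∈ 𝔓, ∫ ω, ξ ω ∂P = ∫ ω, ζ ω ∂P) : sublinearE 𝔓 ξ = sublinearE 𝔓 ζ :=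
  iSup_congr fun P => hb P P.2

lemma sublinearE_add_const (h𝔓 : 𝔓.Nonempty) (hprob : ∀ P ∈ 𝔓, IsProbabilityMeasure P)
    {ξ : Ω → ℝ} {b c : ℝ} (hint : ∀ P ∈ 𝔓, Integrable ξ P)
    (hb : ∀ P ∈ 𝔓, ∫ ω, ξ ω ∂P ≤ b) :
    sublinearE 𝔓 (fun ω => ξ ω + c) = sublinearE 𝔓 ξ + c := by
  haveI : Nonempty ↥𝔓 := h𝔓.to_subtype
  have hEq : ∀ P : 𝔓, ∫ ω, (ξ ω + c) ∂(P : Measure Ω) = (∫ ω, ξ ω ∂(P : Measure Ω)) + c := by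
    intro P
    haveI := hprob P P.2
    rw [integral_add (hint P P.2) (integrable_const c), integral_const]
    simp
  have h1 : sublinearE 𝔓 (fun ω => ξ ω + c) = ⨆ P : 𝔓, ((∫ ω, ξ ω ∂(P : Measure Ω)) + c) :=
    iSup_congr hEq
  rw [h1]
  apply le_antisymm
  · exact ciSup_le fun P => add_le_add_left (le_sublinearE hb P.2) c
  · rw [add_comm, ← le_sub_iff_add_le']
    refine ciSup_le fun P => ?_
    rw [le_sub_iff_add_le', add_comm c]
    refine le_ciSup (f := fun P : 𝔓 => (∫ ω, ξ ω ∂(P : Measure Ω)) + c) ?_ P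
    exact ⟨b + c, by rintro x ⟨Q, rfl⟩; exact add_le_add_left (hb Q Q.2) c⟩



/-- pathwise L¹ mass of `η` on `(0,T]`. -/
def Gv (T : ℝ) (η : ℝ → Ω → ℝ) (ω : Ω) : ℝ≥0∞ :=
  ∫⁻ t in Set.Ioc (0:ℝ) T, ENNReal.ofReal |η t ω|

variable {𝔓 : Set (Measure Ω)} {T : ℝ} {η : ℝ → Ω → ℝ}

lemma lint_Gv_le (P : Measure Ω) (hP : P ∈ 𝔓) :
    ∫⁻ ω, Gv T η ω ∂P ≤ M1norm 𝔓 T η :=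
  le_iSup (fun Q : 𝔓 => ∫⁻ ω, Gv T η ω ∂(Q : Measure Ω)) (⟨P, hP⟩ : ↥𝔓)

lemma meas_slice (hη : Measurable (Function.uncurry η)) (ω : Ω) :
    Measurable fun u => η u ω :=
  hη.comp (measurable_id.prodMk measurable_const)

lemma meas_Gv (hη : Measurable (Function.uncurry η)) : Measurable (Gv T η) := by
  apply Measurable.lintegral_prod_left
  exact ENNReal.measurable_ofReal.comp hη.abs

lemma ae_Gv_lt_top (hη : Measurable (Function.uncurry η)) {P : Measure Ω}
    (hfin : ∫⁻ ω, Gv T η ω ∂P < ⊤) : ∀ᵐ ω ∂P, Gv T η ω < ⊤ :=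
  ae_lt_top (meas_Gv hη) hfin.ne

lemma integrableOn_of_Gv_lt_top (hη : Measurable (Function.uncurry η)) {ω : Ω}
    (hω : Gv T η ω < ⊤) : IntegrableOn (fun u => η u ω) (Set.Ioc (0:ℝ) T) volume := by
  refine ⟨(meas_slice hη ω).aestronglyMeasurable, ?_⟩
  unfold HasFiniteIntegral
  calc ∫⁻ u in Set.Ioc (0:ℝ) T, (‖η u ω‖₊ : ℝ≥0∞)
      = Gv T η ω := by
        unfold Gv; congr 1; funext u; exact Real.enorm_eq_ofReal_abs _
    _ < ⊤ := hω

lemma incr_eq {h : ℝ → Ω → ℝ} {ω : Ω}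
    (hω : IntegrableOn (fun u => h u ω) (Set.Ioc (0:ℝ) T) volume)
    {s t : ℝ} (h0 : 0 ≤ s) (hst : s ≤ t) (htT : t ≤ T) :
    (∫ u in (0:ℝ)..t, h u ω) - (∫ u in (0:ℝ)..s, h u ω) = ∫ u in Set.Ioc s t, h u ω := by
  rw [intervalIntegral.integral_of_le (h0.trans hst), intervalIntegral.integral_of_le h0]
  have hsub1 : Set.Ioc (0:ℝ) s ⊆ Set.Ioc (0:ℝ) T := Set.Ioc_subset_Ioc le_rfl (hst.trans htT)
  have hsub2 : Set.Ioc s t ⊆ Set.Ioc (0:ℝ) T := Set.Ioc_subset_Ioc h0 htT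
  have hu : Set.Ioc (0:ℝ) s ∪ Set.Ioc s t = Set.Ioc (0:ℝ) t := Set.Ioc_union_Ioc_eq_Ioc h0 hst
  rw [← hu, setIntegral_union ((Set.Ioc_disjoint_Ioc_of_le le_rfl)) measurableSet_Ioc
    (hω.mono_set hsub1) (hω.mono_set hsub2)]
  ring

lemma ofReal_setIntegral_abs_le {h : ℝ → Ω → ℝ} {ω : Ω} {s t : ℝ}
    (h0 : 0 ≤ s) (htT : t ≤ T) :
    ENNReal.ofReal |∫ u in Set.Ioc s t, h u ω| ≤ Gv T h ω := by
  rw [← Real.enorm_eq_ofReal_abs]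
  calc (‖∫ u in Set.Ioc s t, h u ω‖₊ : ℝ≥0∞)
      ≤ ∫⁻ u in Set.Ioc s t, (‖h u ω‖₊ : ℝ≥0∞) := enorm_integral_le_lintegral_enorm _
    _ = ∫⁻ u in Set.Ioc s t, ENNReal.ofReal |h u ω| := by
        congr 1; funext u; exact Real.enorm_eq_ofReal_abs _
    _ ≤ Gv T h ω := lintegral_mono_set (Set.Ioc_subset_Ioc h0 htT)

lemma abs_integral_le_toReal {ξ : Ω → ℝ} {P : Measure Ω} {g : Ω → ℝ≥0∞} {K : ℝ≥0∞}
    (hK : K ≠ ⊤) (hae : ∀ᵐ ω ∂P, ENNReal.ofReal |ξ ω| ≤ g ω)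
    (hg : ∫⁻ ω, g ω ∂P ≤ K) : |∫ ω, ξ ω ∂P| ≤ K.toReal := by
  rw [← Real.norm_eq_abs]
  refine (norm_integral_le_lintegral_norm _).trans ?_
  have h1 : ∫⁻ ω, ENNReal.ofReal ‖ξ ω‖ ∂P ≤ K := by
    refine le_trans (lintegral_mono_ae ?_) hg
    filter_upwards [hae] with ω hω
    rwa [Real.norm_eq_abs]
  exact ENNReal.toReal_mono hK h1




/-- canonical form of a step process -/
def stepFun {N : ℕ} (tp : Fin (N + 1) → ℝ) (ξs : Fin N → Ω → ℝ) (u : ℝ) (ω : Ω) : ℝ :=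
  ∑ j, ξs j ω * Set.indicator (Set.Ioc (tp j.castSucc) (tp j.succ)) (fun _ => (1:ℝ)) u

variable {N : ℕ} {tp : Fin (N + 1) → ℝ} {ξs : Fin N → Ω → ℝ} {Cb : Fin N → ℝ}

lemma stepFun_uncurry_measurable (hmeas : ∀ j, Measurable (ξs j)) :
    Measurable (Function.uncurry (stepFun tp ξs)) := by
  have : Function.uncurry (stepFun tp ξs) = fun p : ℝ × Ω =>
      ∑ j, ξs j p.2 * Set.indicator (Set.Ioc (tp j.castSucc) (tp j.succ)) (fun _ => (1:ℝ)) p.1 := by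
    funext p; rfl
  rw [this]
  refine Finset.measurable_sum _ fun j _ => ?_
  exact ((hmeas j).comp measurable_snd).mul
    ((measurable_const.indicator measurableSet_Ioc).comp measurable_fst)

lemma stepFun_abs_le (hCb : ∀ j ω, |ξs j ω| ≤ Cb j) (u : ℝ) (ω : Ω) :
    |stepFun tp ξs u ω| ≤ ∑ j, Cb j := by
  refine (Finset.abs_sum_le_sum_abs _ _).trans (Finset.sum_le_sum fun j _ => ?_)
  rw [abs_mul]
  calc |ξs j ω| * |Set.indicator (Set.Ioc (tp j.castSucc) (tp j.succ)) (fun _ => (1:ℝ)) u|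
      ≤ Cb j * 1 := by
        refine mul_le_mul (hCb j ω) ?_ (abs_nonneg _) ((abs_nonneg _).trans (hCb j ω))
        rcases Set.indicator_eq_zero_or_self (Set.Ioc (tp j.castSucc) (tp j.succ))
          (fun _ => (1:ℝ)) u with h | h <;> rw [h] <;> norm_num
    _ = Cb j := mul_one _

lemma stepFun_integrableOn (hmeas : ∀ j, Measurable (ξs j)) (hCb : ∀ j ω, |ξs j ω| ≤ Cb j)
    (ω : Ω) (a b : ℝ) : IntegrableOn (fun u => stepFun tp ξs u ω) (Set.Ioc a b) volume := by
  haveI : IsFiniteMeasure (volume.restrict (Set.Ioc a b)) :=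
    ⟨by rw [Measure.restrict_apply_univ, Real.volume_Ioc]; exact ENNReal.ofReal_lt_top⟩
  refine (integrable_const (∑ j, Cb j)).mono' ?_ ?_
  · refine Measurable.aestronglyMeasurable ?_
    have : (fun u => stepFun tp ξs u ω) = fun u =>
        ∑ j, ξs j ω * Set.indicator (Set.Ioc (tp j.castSucc) (tp j.succ)) (fun _ => (1:ℝ)) u := by
      funext u; rfl
    rw [this]
    exact Finset.measurable_sum _ fun j _ =>
      (measurable_const.indicator measurableSet_Ioc).const_mul _
  · exact Eventually.of_forall fun u => (Real.norm_eq_abs _) ▸ stepFun_abs_le hCb u ω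

lemma stepFun_setIntegral_abs_le (hmeas : ∀ j, Measurable (ξs j)) (hCb : ∀ j ω, |ξs j ω| ≤ Cb j)
    (ω : Ω) {a b : ℝ} (hab : a ≤ b) :
    |∫ u in Set.Ioc a b, stepFun tp ξs u ω| ≤ (∑ j, Cb j) * (b - a) := by
  rw [← Real.norm_eq_abs]
  have h1 : ‖∫ u in Set.Ioc a b, stepFun tp ξs u ω‖ ≤
      (∑ j, Cb j) * (volume (Set.Ioc a b)).toReal := by
    refine norm_setIntegral_le_of_norm_le_const ?_ ?_
    · rw [Real.volume_Ioc]; exact ENNReal.ofReal_lt_top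
    · intro u _; rw [Real.norm_eq_abs]; exact stepFun_abs_le hCb u ω
  rwa [Real.volume_Ioc, ENNReal.toReal_ofReal (by linarith)] at h1

lemma stepFun_setIntegral_eq (htp : StrictMono tp) (hmeas : ∀ j, Measurable (ξs j))
    (hCb : ∀ j ω, |ξs j ω| ≤ Cb j) (ω : Ω) {a b : ℝ} (j0 : Fin N)
    (ha : tp j0.castSucc ≤ a) (hab : a ≤ b) (hb : b ≤ tp j0.succ) :
    ∫ u in Set.Ioc a b, stepFun tp ξs u ω = ξs j0 ω * (b - a) := by
  have hint : ∀ j : Fin N, IntegrableOn (fun u => ξs j ω *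
      Set.indicator (Set.Ioc (tp j.castSucc) (tp j.succ)) (fun _ => (1:ℝ)) u)
      (Set.Ioc a b) volume := by
    intro j
    haveI : IsFiniteMeasure (volume.restrict (Set.Ioc a b)) :=
      ⟨by rw [Measure.restrict_apply_univ, Real.volume_Ioc]; exact ENNReal.ofReal_lt_top⟩
    refine (integrable_const |ξs j ω|).mono' ?_ ?_
    · exact ((measurable_const.indicator measurableSet_Ioc).const_mul _).aestronglyMeasurable
    · refine Eventually.of_forall fun u => ?_
      rw [Real.norm_eq_abs, abs_mul]
      rcases Set.indicator_eq_zero_or_self (Set.Ioc (tp j.castSucc) (tp j.succ))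
        (fun _ => (1:ℝ)) u with h | h <;> rw [h] <;> simp [abs_nonneg]
  have hsum : ∫ u in Set.Ioc a b, stepFun tp ξs u ω =
      ∑ j, ∫ u in Set.Ioc a b, ξs j ω *
        Set.indicator (Set.Ioc (tp j.castSucc) (tp j.succ)) (fun _ => (1:ℝ)) u := by
    rw [← integral_finset_sum _ fun j _ => hint j]; rfl
  rw [hsum]
  have hterm : ∀ j : Fin N, (∫ u in Set.Ioc a b, ξs j ω *
      Set.indicator (Set.Ioc (tp j.castSucc) (tp j.succ)) (fun _ => (1:ℝ)) u) =
      if j = j0 then ξs j0 ω * (b - a) else 0 := by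
    intro j
    rw [integral_const_mul, setIntegral_indicator measurableSet_Ioc]
    have hI : Set.Ioc a b ∩ Set.Ioc (tp j.castSucc) (tp j.succ) =
        Set.Ioc (max a (tp j.castSucc)) (min b (tp j.succ)) := Set.Ioc_inter_Ioc
    rw [hI, setIntegral_const, Measure.real, Real.volume_Ioc, smul_eq_mul, mul_one]
    rcases lt_trichotomy j j0 with hlt | heq | hgt
    · have h2 : tp j.succ ≤ tp j0.castSucc := htp.monotone (Fin.succ_le_castSucc_iff.2 hlt)
      rw [if_neg hlt.ne]
      have : min b (tp j.succ) - max a (tp j.castSucc) ≤ 0 := by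
        have := min_le_right b (tp j.succ)
        have := le_max_left a (tp j.castSucc)
        linarith
      rw [ENNReal.ofReal_eq_zero.2 this]
      simp
    · subst heq
      rw [if_pos rfl, max_eq_left ha, min_eq_left hb,
        ENNReal.toReal_ofReal (by linarith), mul_comm]
    · have h2 : tp j0.succ ≤ tp j.castSucc := htp.monotone (Fin.succ_le_castSucc_iff.2 hgt)
      rw [if_neg hgt.ne']
      have : min b (tp j.succ) - max a (tp j.castSucc) ≤ 0 := by
        have := min_le_left b (tp j.succ)
        have := le_max_right a (tp j.castSucc)
        linarith
      rw [ENNReal.ofReal_eq_zero.2 this]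
      simp
  rw [Finset.sum_congr rfl fun j _ => hterm j, Finset.sum_ite_eq' Finset.univ j0]
  simp



set_option maxHeartbeats 1600000 in
lemma linear_of_additive {f : ℝ → ℝ} {T : ℝ} (hT : 0 < T)
    (hadd : ∀ s t : ℝ, 0 ≤ s → s ≤ t → t ≤ T → f t = f s + f (t - s))
    (hsmall : ∀ ε : ℝ, 0 < ε → ∃ C : ℝ, 0 ≤ C ∧ ∀ t, 0 ≤ t → t ≤ T → |f t| ≤ C * t + ε) :
    ∀ t, 0 ≤ t → t ≤ T → f t = t / T * f T := by
  have hf0 : f 0 = 0 := by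
    have := hadd 0 0 le_rfl le_rfl hT.le
    simp at this
    linarith [this]
  have hmul : ∀ (k : ℕ) (δ : ℝ), 0 ≤ δ → (k : ℝ) * δ ≤ T → f ((k : ℝ) * δ) = (k : ℝ) * f δ := by
    intro k
    induction k with
    | zero => intro δ _ _; simpa using hf0
    | succ k ih =>
      intro δ hδ hkT
      have hk1 : (k : ℝ) * δ ≤ ((k : ℝ) + 1) * δ := by nlinarith
      have hcast : ((k + 1 : ℕ) : ℝ) = (k : ℝ) + 1 := by push_cast; ring
      rw [hcast] at hkT ⊢
      have h1 : f (((k : ℝ) + 1) * δ) = f ((k : ℝ) * δ) + f (((k : ℝ) + 1) * δ - (k : ℝ) * δ) :=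
        hadd ((k : ℝ) * δ) (((k : ℝ) + 1) * δ) (by positivity) hk1 hkT
      have h2 : ((k : ℝ) + 1) * δ - (k : ℝ) * δ = δ := by ring
      rw [h2] at h1
      rw [h1, ih δ hδ (hk1.trans hkT)]
      ring
  intro t ht0 htT
  have key : ∀ ε : ℝ, 0 < ε → |f t - t / T * f T| ≤ ε := by
    intro ε hε
    obtain ⟨C, hC0, hC⟩ := hsmall (ε / 2) (by linarith)
    set K := (|f T| / T + C) * T with hK
    have hK0 : 0 ≤ K := by
      have : 0 ≤ |f T| / T := div_nonneg (abs_nonneg _) hT.le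
      nlinarith
    obtain ⟨n0, hn0⟩ := exists_nat_gt (K / (ε / 2))
    set n := n0 + 1 with hn
    have hnpos : 0 < (n : ℝ) := by positivity
    have hKn : K / n ≤ ε / 2 := by
      have hn0' : K / (ε / 2) < (n : ℝ) := by
        rw [hn]; push_cast
        have : (n0 : ℝ) ≤ (n0 : ℝ) + 1 := by linarith
        linarith
      rw [div_le_iff₀ hnpos]
      rw [div_lt_iff₀ (by linarith : (0:ℝ) < ε / 2)] at hn0'
      linarith
    set δ := T / n with hδdef
    have hδpos : 0 < δ := by positivity
    have hnδ : (n : ℝ) * δ = T := by rw [hδdef]; field_simp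
    set k := ⌊t / δ⌋₊ with hk
    have hkδt : (k : ℝ) * δ ≤ t := by
      have := Nat.floor_le (div_nonneg ht0 hδpos.le)
      calc (k : ℝ) * δ ≤ (t / δ) * δ := by nlinarith
        _ = t := by field_simp
    have htk1 : t < ((k : ℝ) + 1) * δ := by
      have := Nat.lt_floor_add_one (t / δ)
      calc t = (t / δ) * δ := by field_simp
        _ < ((k : ℝ) + 1) * δ := by nlinarith
    have hkn : (k : ℝ) ≤ (n : ℝ) := by
      have h1 : t / δ ≤ (n : ℝ) := by
        rw [div_le_iff₀ hδpos]; nlinarith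
      have := Nat.floor_le_floor (R := ℝ) h1
      rw [Nat.floor_natCast] at this
      exact_mod_cast this
    have h1 : f t = f ((k : ℝ) * δ) + f (t - (k : ℝ) * δ) :=
      hadd ((k : ℝ) * δ) t (by positivity) hkδt htT
    have h2 : f ((k : ℝ) * δ) = (k : ℝ) * f δ := hmul k δ hδpos.le (hkδt.trans htT)
    have h3 : f T = (n : ℝ) * f δ := by rw [← hnδ]; exact hmul n δ hδpos.le hnδ.le
    have h4 : |f (t - (k : ℝ) * δ)| ≤ C * δ + ε / 2 := by
      have hle : t - (k : ℝ) * δ ≤ δ := by linarith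
      have h5 := hC (t - (k : ℝ) * δ) (by linarith) (by nlinarith [hnδ, hδpos.le, hnpos])
      have : C * (t - (k : ℝ) * δ) ≤ C * δ := by nlinarith
      linarith
    -- |f t - t/T * f T| ≤ |fT| * δ / T + C δ + ε/2 = K/n + ε/2 ≤ ε
    have hfδ : f δ = f T / n := by rw [h3]; field_simp
    have hD : f t - t / T * f T = ((k : ℝ) / n - t / T) * f T + f (t - (k : ℝ) * δ) := by
      rw [h1, h2, hfδ]; field_simp; ring
    have habs1 : |(k : ℝ) / n - t / T| ≤ δ / T := by
      have e : (k : ℝ) / n - t / T = ((k : ℝ) * δ - t) / T := by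
        rw [hδdef]; field_simp; all_goals ring
      rw [e, abs_div, abs_of_pos hT]
      have habs2 : |(k : ℝ) * δ - t| ≤ δ := by
        rw [abs_le]; constructor <;> linarith
      gcongr
    have hbound : |f t - t / T * f T| ≤ δ / T * |f T| + (C * δ + ε / 2) := by
      rw [hD]
      refine (abs_add_le _ _).trans (add_le_add ?_ h4)
      rw [abs_mul]
      exact mul_le_mul_of_nonneg_right habs1 (abs_nonneg _)
    have hKval : δ / T * |f T| + C * δ = K / n := by
      rw [hK, hδdef]; ring
    linarith
  have h0 : |f t - t / T * f T| ≤ 0 := by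
    refine le_of_forall_pos_le_add ?_
    intro ε hε
    simpa using key ε hε
  have hzero := abs_eq_zero.mp (le_antisymm h0 (abs_nonneg _))
  linarith

lemma ofReal_abs_setIntegral_le (f : ℝ → ℝ) (s : Set ℝ) :
    ENNReal.ofReal |∫ u in s, f u| ≤ ∫⁻ u in s, ENNReal.ofReal |f u| := by
  rw [← Real.enorm_eq_ofReal_abs]
  calc (‖∫ u in s, f u‖₊ : ℝ≥0∞)
      ≤ ∫⁻ u in s, (‖f u‖₊ : ℝ≥0∞) := enorm_integral_le_lintegral_enorm _
    _ = ∫⁻ u in s, ENNReal.ofReal |f u| := by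
        congr 1; funext u; exact Real.enorm_eq_ofReal_abs _

lemma sum_range_two_mul (g : ℕ → ℝ) : ∀ N : ℕ,
    ∑ i ∈ Finset.range (2*N), g i = ∑ j ∈ Finset.range N, (g (2*j) + g (2*j+1)) := by
  intro N
  induction N with
  | zero => simp
  | succ N ih =>
    rw [show 2*(N+1) = 2*N+1+1 by ring, Finset.sum_range_succ, Finset.sum_range_succ,
      Finset.sum_range_succ, ih]
    ring

lemma sum_lintegral_Ioc {F : ℝ → ℝ≥0∞} {v : ℕ → ℝ} (hv : Monotone v) : ∀ k : ℕ,
    ∑ i ∈ Finset.range k, (∫⁻ x in Set.Ioc (v i) (v (i+1)), F x) =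
      ∫⁻ x in Set.Ioc (v 0) (v k), F x := by
  intro k
  induction k with
  | zero => simp
  | succ k ih =>
    rw [Finset.sum_range_succ, ih,
      ← lintegral_union measurableSet_Ioc (Set.Ioc_disjoint_Ioc_of_le le_rfl),
      Set.Ioc_union_Ioc_eq_Ioc (hv (Nat.zero_le k)) (hv (Nat.le_succ k))]

section Core

variable {𝔓 : Set (Measure Ω)} {T : ℝ} {h A : ℝ → Ω → ℝ}

lemma ae_good {P : Measure Ω} (hh : MemM1 𝔓 T h) (hP : P ∈ 𝔓) :
    ∀ᵐ ω ∂P, IntegrableOn (fun u => h u ω) (Set.Ioc (0:ℝ) T) volume := by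
  have hae := ae_Gv_lt_top hh.1 ((lint_Gv_le P hP).trans_lt hh.2.1)
  filter_upwards [hae] with ω hω
  exact integrableOn_of_Gv_lt_top hh.1 hω

lemma absE_incr_le (hh : MemM1 𝔓 T h)
    (hA : ∀ t ω, A t ω = ∫ s in (0:ℝ)..t, h s ω)
    {s t : ℝ} (h0 : 0 ≤ s) (hst : s ≤ t) (htT : t ≤ T) {P : Measure Ω} (hP : P ∈ 𝔓) :
    |∫ ω, (A t ω - A s ω) ∂P| ≤ (M1norm 𝔓 T h).toReal := by
  refine abs_integral_le_toReal (g := Gv T h) hh.2.1.ne ?_ (lint_Gv_le P hP)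
  filter_upwards [ae_good hh hP] with ω hω
  have hinc := incr_eq hω h0 hst htT
  rw [hA t ω, hA s ω, hinc]
  exact ofReal_setIntegral_abs_le h0 htT

/-- modulus of continuity for the expected increments, uniformly in `P`. -/
lemma modulus (hprob : ∀ P ∈ 𝔓, IsProbabilityMeasure P) (hh : MemM1 𝔓 T h)
    (hA : ∀ t ω, A t ω = ∫ s in (0:ℝ)..t, h s ω) {ε : ℝ} (hε : 0 < ε) :
    ∃ C : ℝ, 0 ≤ C ∧ ∀ s t : ℝ, 0 ≤ s → s ≤ t → t ≤ T → ∀ P ∈ 𝔓,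
      |∫ ω, (A t ω - A s ω) ∂P| ≤ C * (t - s) + ε := by
  obtain ⟨ζ, hζstep, hζnorm⟩ := hh.2.2 (ENNReal.ofReal ε) (ENNReal.ofReal_pos.2 hε)
  obtain ⟨N, tp, ξs, htp0, htpT, htpmono, hξmeas, hξbdd, hζeq⟩ := hζstep
  set Cb : Fin N → ℝ := fun j => max (Classical.choose (hξbdd j)) 0 with hCbdef
  have hCb : ∀ j ω, |ξs j ω| ≤ Cb j := fun j ω =>
    (Classical.choose_spec (hξbdd j) ω).trans (le_max_left _ _)
  refine ⟨∑ j, Cb j, Finset.sum_nonneg fun j _ => le_max_right _ _, ?_⟩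
  intro s t h0 hst htT P hP
  set η : ℝ → Ω → ℝ := fun u ω => h u ω - ζ u ω with hηdef
  have hζsf : ζ = stepFun tp ξs := by funext u ω; exact hζeq u ω
  have hζm : Measurable (Function.uncurry ζ) := by
    rw [hζsf]; exact stepFun_uncurry_measurable hξmeas
  have hηm : Measurable (Function.uncurry η) := hh.1.sub hζm
  have hηfin : ∫⁻ ω, Gv T η ω ∂P < ⊤ :=
    (((lint_Gv_le P hP).trans_lt hζnorm).trans ENNReal.ofReal_lt_top)
  haveI := hprob P hP
  have hCts : 0 ≤ (∑ j, Cb j) * (t - s) :=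
    mul_nonneg (Finset.sum_nonneg fun j _ => le_max_right _ _) (by linarith)
  have hKtr : (ENNReal.ofReal ((∑ j, Cb j) * (t - s)) + ENNReal.ofReal ε).toReal =
      (∑ j, Cb j) * (t - s) + ε := by
    rw [ENNReal.toReal_add ENNReal.ofReal_ne_top ENNReal.ofReal_ne_top,
      ENNReal.toReal_ofReal hCts, ENNReal.toReal_ofReal hε.le]
  rw [← hKtr]
  refine abs_integral_le_toReal
    (g := fun ω => ENNReal.ofReal ((∑ j, Cb j) * (t - s)) + Gv T η ω)
    (K := ENNReal.ofReal ((∑ j, Cb j) * (t - s)) + ENNReal.ofReal ε) ?_ ?_ ?_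
  · exact ENNReal.add_ne_top.2 ⟨ENNReal.ofReal_ne_top, ENNReal.ofReal_ne_top⟩
  · filter_upwards [ae_good hh hP, ae_Gv_lt_top hηm hηfin] with ω hω hηω
    have hηio : IntegrableOn (fun u => η u ω) (Set.Ioc (0:ℝ) T) volume :=
      integrableOn_of_Gv_lt_top hηm hηω
    have hinc := incr_eq hω h0 hst htT
    rw [hA t ω, hA s ω, hinc]
    have hsub : Set.Ioc s t ⊆ Set.Ioc (0:ℝ) T := Set.Ioc_subset_Ioc h0 htT
    have hsplit : ∫ u in Set.Ioc s t, h u ω =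
        (∫ u in Set.Ioc s t, η u ω) + ∫ u in Set.Ioc s t, stepFun tp ξs u ω := by
      rw [← integral_add (hηio.mono_set hsub) (stepFun_integrableOn hξmeas hCb ω s t)]
      congr 1; funext u
      rw [hηdef]; simp [hζsf.symm]
    rw [hsplit]
    have h1 : |(∫ u in Set.Ioc s t, η u ω) + ∫ u in Set.Ioc s t, stepFun tp ξs u ω| ≤
        |∫ u in Set.Ioc s t, stepFun tp ξs u ω| + |∫ u in Set.Ioc s t, η u ω| := by
      refine (abs_add_le _ _).trans ?_; ring_nf; exact le_rfl
    refine le_trans (ENNReal.ofReal_le_ofReal h1) ?_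
    rw [ENNReal.ofReal_add (abs_nonneg _) (abs_nonneg _)]
    refine add_le_add (ENNReal.ofReal_le_ofReal ?_) (ofReal_setIntegral_abs_le h0 htT)
    exact stepFun_setIntegral_abs_le hξmeas hCb ω hst
  · rw [lintegral_add_left measurable_const, lintegral_const, measure_univ, mul_one]
    exact add_le_add_right (le_of_lt ((lint_Gv_le P hP).trans_lt hζnorm)) _

lemma sublinearE_zero (h𝔓 : 𝔓.Nonempty) : sublinearE 𝔓 (fun _ => (0:ℝ)) = 0 := by
  haveI : Nonempty ↥𝔓 := h𝔓.to_subtype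
  simp only [sublinearE, integral_zero, ciSup_const]

lemma stat_incr (hstat : HasStationaryIncrements 𝔓 T A)
    (hAint : ∀ t ∈ Set.Icc (0:ℝ) T, ∀ P ∈ 𝔓, Integrable (A t) P)
    {s t : ℝ} (h0 : 0 ≤ s) (hst : s ≤ t) (htT : t ≤ T) :
    sublinearE 𝔓 (fun ω => A t ω - A s ω) = sublinearE 𝔓 (A (t - s)) := by
  have hid : CLLip (fun x : ℝ => x) := by
    refine ⟨1, 0, fun x y => ?_⟩
    simp only [pow_zero, Real.norm_eq_abs]
    nlinarith [abs_nonneg (x - y)]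
  exact hstat s t h0 hst htT (fun x => x) hid
    (fun P hP => (hAint t ⟨h0.trans hst, htT⟩ P hP).sub (hAint s ⟨h0, hst.trans htT⟩ P hP))
    (fun P hP => hAint (t - s) ⟨by linarith, by linarith⟩ P hP)

lemma stat_incr_neg (hstat : HasStationaryIncrements 𝔓 T A)
    (hAint : ∀ t ∈ Set.Icc (0:ℝ) T, ∀ P ∈ 𝔓, Integrable (A t) P)
    {s t : ℝ} (h0 : 0 ≤ s) (hst : s ≤ t) (htT : t ≤ T) :
    sublinearE 𝔓 (fun ω => -(A t ω - A s ω)) = sublinearE 𝔓 (fun ω => -A (t - s) ω) := by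
  have hneg : CLLip (fun x : ℝ => -x) := by
    refine ⟨1, 0, fun x y => ?_⟩
    simp only [pow_zero, Real.norm_eq_abs, neg_sub_neg]
    rw [abs_sub_comm]
    nlinarith [abs_nonneg (x - y)]
  exact hstat s t h0 hst htT (fun x => -x) hneg
    (fun P hP => ((hAint t ⟨h0.trans hst, htT⟩ P hP).sub
      (hAint s ⟨h0, hst.trans htT⟩ P hP)).neg)
    (fun P hP => (hAint (t - s) ⟨by linarith, by linarith⟩ P hP).neg)

set_option maxHeartbeats 1000000 in
lemma key_sum (h𝔓 : 𝔓.Nonempty) (hprob : ∀ P ∈ 𝔓, IsProbabilityMeasure P)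
    (hh : MemM1 𝔓 T h) (hA : ∀ t ω, A t ω = ∫ s in (0:ℝ)..t, h s ω)
    (hAint : ∀ t ∈ Set.Icc (0:ℝ) T, ∀ P ∈ 𝔓, Integrable (A t) P)
    (hstat : HasStationaryIncrements 𝔓 T A) (hind : HasIndepIncrements 𝔓 T A)
    (n : ℕ) :
    ∀ (u : Fin (n+1) → ℝ) (ε : ℕ → ℝ), Monotone u → 0 ≤ u 0 → u (Fin.last n) ≤ T →
    (∀ i, ε i = 1 ∨ ε i = -1) →
    sublinearE 𝔓 (fun ω => ∑ i : Fin n, ε (i:ℕ) * (A (u i.succ) ω - A (u i.castSucc) ω)) =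
    ∑ i : Fin n, (if ε (i:ℕ) = 1 then sublinearE 𝔓 (A (u i.succ - u i.castSucc))
      else sublinearE 𝔓 (fun ω => -A (u i.succ - u i.castSucc) ω)) := by
  induction n with
  | zero =>
    intro u ε _ _ _ _
    simp only [Finset.univ_eq_empty, Finset.sum_empty]
    exact sublinearE_zero h𝔓
  | succ n ih =>
    intro u ε hu hu0 huT hε
    have hmem : ∀ j : Fin (n+2), 0 ≤ u j ∧ u j ≤ T := fun j =>
      ⟨hu0.trans (hu (Fin.zero_le j)), (hu (Fin.le_last j)).trans huT⟩
    have habs : ∀ i, |ε i| = 1 := by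
      intro i; rcases hε i with h1 | h1 <;> rw [h1] <;> norm_num
    set B := (M1norm 𝔓 T h).toReal with hBdef
    set p : Fin (n+2) := (Fin.last n).castSucc with hpdef
    set q : Fin (n+2) := Fin.last (n+1) with hqdef
    have hpq : p ≤ q := Fin.le_last p
    set sv : Fin (n+1) → ℝ := fun i => u i.castSucc with hsvdef
    set tv : Fin 2 → ℝ := ![u p, u q] with htvdef
    have hsv_mono : Monotone sv := fun a b hab => hu (Fin.castSucc_le_castSucc_iff.2 hab)
    have htv_mono : Monotone tv := by
      rw [Fin.monotone_iff_le_succ]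
      intro i
      fin_cases i
      simpa [htvdef] using hu hpq
    have hIO := hind n 1 sv tv hsv_mono htv_mono
      (by simpa [hsvdef] using (hmem 0).1)
      (by simp [hsvdef, htvdef, hpdef])
      (by simpa [htvdef] using (hmem q).2)
    set X : Ω → Fin n → ℝ := fun ω i => A (sv i.succ) ω - A (sv i.castSucc) ω with hXdef
    set Y : Ω → Fin 1 → ℝ := fun ω i => A (tv i.succ) ω - A (tv i.castSucc) ω with hYdef
    set φ : (Fin n → ℝ) × (Fin 1 → ℝ) → ℝ :=
      fun z => (∑ i : Fin n, ε (i:ℕ) * z.1 i) + ε n * z.2 0 with hφdef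
    have hY0 : ∀ ω, Y ω 0 = A (u q) ω - A (u p) ω := by
      intro ω; simp [hYdef, htvdef]
    -- CLLip
    have hCL : CLLip φ := by
      refine ⟨(n : ℝ) + 1, 0, fun x y => ?_⟩
      simp only [pow_zero]
      have hle : |φ x - φ y| ≤ ((n : ℝ) + 1) * ‖x - y‖ := by
        have hxy : φ x - φ y =
            (∑ i : Fin n, ε (i:ℕ) * (x.1 i - y.1 i)) + ε n * (x.2 0 - y.2 0) := by
          simp only [hφdef, mul_sub, Finset.sum_sub_distrib]
          ring
        rw [hxy]
        have h1 : ∀ i : Fin n, |ε (i:ℕ) * (x.1 i - y.1 i)| ≤ ‖x - y‖ := by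
          intro i
          rw [abs_mul, habs, one_mul]
          calc |x.1 i - y.1 i| = ‖(x.1 - y.1) i‖ := by simp [Real.norm_eq_abs]
            _ ≤ ‖x.1 - y.1‖ := norm_le_pi_norm _ i
            _ = ‖(x - y).1‖ := by rfl
            _ ≤ ‖x - y‖ := norm_fst_le _
        have h2 : |ε n * (x.2 0 - y.2 0)| ≤ ‖x - y‖ := by
          rw [abs_mul, habs, one_mul]
          calc |x.2 0 - y.2 0| = ‖(x.2 - y.2) 0‖ := by simp [Real.norm_eq_abs]
            _ ≤ ‖x.2 - y.2‖ := norm_le_pi_norm _ 0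
            _ = ‖(x - y).2‖ := by rfl
            _ ≤ ‖x - y‖ := norm_snd_le _
        calc |(∑ i : Fin n, ε (i:ℕ) * (x.1 i - y.1 i)) + ε n * (x.2 0 - y.2 0)|
            ≤ |∑ i : Fin n, ε (i:ℕ) * (x.1 i - y.1 i)| + |ε n * (x.2 0 - y.2 0)| := abs_add_le _ _
          _ ≤ (∑ i : Fin n, |ε (i:ℕ) * (x.1 i - y.1 i)|) + ‖x - y‖ :=
              add_le_add (Finset.abs_sum_le_sum_abs _ _) h2
          _ ≤ (∑ _i : Fin n, ‖x - y‖) + ‖x - y‖ :=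
              add_le_add (Finset.sum_le_sum fun i _ => h1 i) le_rfl
          _ = ((n : ℝ) + 1) * ‖x - y‖ := by
              rw [Finset.sum_const, Finset.card_univ, Fintype.card_fin]; ring
      refine hle.trans ?_
      have hn0 : (0:ℝ) ≤ ‖x - y‖ := norm_nonneg _
      nlinarith
    -- integrability of increments
    have hincint : ∀ (a b : Fin (n+2)), ∀ P ∈ 𝔓,
        Integrable (fun ω => A (u b) ω - A (u a) ω) P := fun a b P hP =>
      (hAint (u b) ⟨(hmem b).1, (hmem b).2⟩ P hP).sub (hAint (u a) ⟨(hmem a).1, (hmem a).2⟩ P hP)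
    have hBbound : ∀ (a b : Fin (n+2)), a ≤ b → ∀ P ∈ 𝔓,
        |∫ ω, (A (u b) ω - A (u a) ω) ∂P| ≤ B := fun a b hab P hP =>
      absE_incr_le hh hA (hmem a).1 (hu hab) (hmem b).2 hP
    -- sup of the last increment
    set Δ : ℝ := u q - u p with hΔdef
    set c : ℝ := if ε n = 1 then sublinearE 𝔓 (A Δ)
      else sublinearE 𝔓 (fun ω => -A Δ ω) with hcdef
    have hlast1 : sublinearE 𝔓 (fun ω => A (u q) ω - A (u p) ω) = sublinearE 𝔓 (A Δ) :=
      stat_incr hstat hAint (hmem p).1 (hu hpq) (hmem q).2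
    have hlast2 : sublinearE 𝔓 (fun ω => -(A (u q) ω - A (u p) ω)) =
        sublinearE 𝔓 (fun ω => -A Δ ω) :=
      stat_incr_neg hstat hAint (hmem p).1 (hu hpq) (hmem q).2
    have hYval : sublinearE 𝔓 (fun ω => ε n * (A (u q) ω - A (u p) ω)) = c := by
      rcases hε n with h1 | h1 <;> rw [hcdef, h1]
      · rw [if_pos rfl, ← hlast1]
        congr 1; funext ω; ring
      · rw [if_neg (by norm_num), ← hlast2]
        congr 1; funext ω; ring
    -- inner sublinear expectation
    have hlastint : ∀ P ∈ 𝔓, Integrable (fun ω => ε n * (A (u q) ω - A (u p) ω)) P :=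
      fun P hP => (hincint p q P hP).const_mul _
    have hlastbd : ∀ P ∈ 𝔓, ∫ ω, ε n * (A (u q) ω - A (u p) ω) ∂P ≤ B := by
      intro P hP
      rw [integral_const_mul]
      calc ε n * ∫ ω, (A (u q) ω - A (u p) ω) ∂P
          ≤ |ε n * ∫ ω, (A (u q) ω - A (u p) ω) ∂P| := le_abs_self _
        _ = |∫ ω, (A (u q) ω - A (u p) ω) ∂P| := by rw [abs_mul, habs, one_mul]
        _ ≤ B := hBbound p q hpq P hP
    have hinner : ∀ x : Fin n → ℝ, (fun ω' => φ (x, Y ω')) =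
        fun ω' => ε n * (A (u q) ω' - A (u p) ω') + (∑ i : Fin n, ε (i:ℕ) * x i) := by
      intro x; funext ω'
      simp only [hφdef, hY0]
      ring
    have hinnerval : ∀ x : Fin n → ℝ,
        sublinearE 𝔓 (fun ω' => φ (x, Y ω')) = (∑ i : Fin n, ε (i:ℕ) * x i) + c := by
      intro x
      rw [hinner x, sublinearE_add_const h𝔓 hprob hlastint hlastbd, hYval]
      ring
    -- the four hypotheses of IndepOf
    have harg1 : ∀ P ∈ 𝔓, Integrable (fun ω => φ (X ω, Y ω)) P := by
      intro P hP
      have : (fun ω => φ (X ω, Y ω)) =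
          fun ω => (∑ i : Fin n, ε (i:ℕ) * (A (sv i.succ) ω - A (sv i.castSucc) ω))
            + ε n * (A (u q) ω - A (u p) ω) := by
        funext ω; simp only [hφdef, hXdef, hY0]
      rw [this]
      refine Integrable.add ?_ (hlastint P hP)
      refine integrable_finset_sum _ fun i _ => ?_
      exact ((hAint (sv i.succ) ⟨(hmem _).1, (hmem _).2⟩ P hP).sub
        (hAint (sv i.castSucc) ⟨(hmem _).1, (hmem _).2⟩ P hP)).const_mul _
    have harg2 : ∀ x : Fin n → ℝ, ∀ P ∈ 𝔓, Integrable (fun ω => φ (x, Y ω)) P := by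
      intro x P hP
      haveI := hprob P hP
      rw [hinner x]
      exact (hlastint P hP).add (integrable_const _)
    have harg3 : ∀ P ∈ 𝔓,
        Integrable (fun ω => sublinearE 𝔓 (fun ω' => φ (X ω, Y ω'))) P := by
      intro P hP
      have heq2 : (fun ω => sublinearE 𝔓 (fun ω' => φ (X ω, Y ω'))) =
          fun ω => (∑ i : Fin n, ε (i:ℕ) * (A (sv i.succ) ω - A (sv i.castSucc) ω)) + c := by
        funext ω; exact hinnerval (X ω)
      haveI := hprob P hP
      rw [heq2]
      refine Integrable.add ?_ (integrable_const _)
      refine integrable_finset_sum _ fun i _ => ?_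
      exact ((hAint (sv i.succ) ⟨(hmem _).1, (hmem _).2⟩ P hP).sub
        (hAint (sv i.castSucc) ⟨(hmem _).1, (hmem _).2⟩ P hP)).const_mul _
    have hkey := hIO φ hCL harg1 harg2 harg3
    -- identify LHS
    have hsumint : ∀ P ∈ 𝔓, Integrable
        (fun ω => ∑ i : Fin n, ε (i:ℕ) * (A (sv i.succ) ω - A (sv i.castSucc) ω)) P := by
      intro P hP
      refine integrable_finset_sum _ fun i _ => ?_
      exact ((hAint (sv i.succ) ⟨(hmem _).1, (hmem _).2⟩ P hP).sub
        (hAint (sv i.castSucc) ⟨(hmem _).1, (hmem _).2⟩ P hP)).const_mul _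
    have hsumbd : ∀ P ∈ 𝔓,
        ∫ ω, (∑ i : Fin n, ε (i:ℕ) * (A (sv i.succ) ω - A (sv i.castSucc) ω)) ∂P
          ≤ (n : ℝ) * B := by
      intro P hP
      rw [integral_finset_sum _ fun i _ =>
        ((hAint (sv i.succ) ⟨(hmem _).1, (hmem _).2⟩ P hP).sub
        (hAint (sv i.castSucc) ⟨(hmem _).1, (hmem _).2⟩ P hP)).const_mul _]
      calc ∑ i : Fin n, ∫ ω, ε (i:ℕ) * (A (sv i.succ) ω - A (sv i.castSucc) ω) ∂P
          ≤ ∑ _i : Fin n, B := by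
            refine Finset.sum_le_sum fun i _ => ?_
            rw [integral_const_mul]
            calc ε (i:ℕ) * ∫ ω, (A (sv i.succ) ω - A (sv i.castSucc) ω) ∂P
                ≤ |ε (i:ℕ) * ∫ ω, (A (sv i.succ) ω - A (sv i.castSucc) ω) ∂P| := le_abs_self _
              _ = |∫ ω, (A (sv i.succ) ω - A (sv i.castSucc) ω) ∂P| := by
                  rw [abs_mul, habs, one_mul]
              _ ≤ B := hBbound i.castSucc.castSucc i.succ.castSucc
                  (Fin.castSucc_le_castSucc_iff.2 (Fin.castSucc_le_succ i)) P hP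
        _ = (n : ℝ) * B := by
            rw [Finset.sum_const, Finset.card_univ, Fintype.card_fin, nsmul_eq_mul]
    -- put everything together
    have hLHSeq : (fun ω => ∑ i : Fin (n+1), ε (i:ℕ) * (A (u i.succ) ω - A (u i.castSucc) ω)) =
        fun ω => φ (X ω, Y ω) := by
      funext ω
      simp only [hφdef, hXdef, hY0]
      rw [Fin.sum_univ_castSucc]
      congr 1
    calc sublinearE 𝔓 (fun ω => ∑ i : Fin (n+1), ε (i:ℕ) *
            (A (u i.succ) ω - A (u i.castSucc) ω))
        = sublinearE 𝔓 (fun ω => sublinearE 𝔓 (fun ω' => φ (X ω, Y ω'))) := by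
          rw [hLHSeq]; exact hkey
      _ = sublinearE 𝔓 (fun ω =>
            (∑ i : Fin n, ε (i:ℕ) * (A (sv i.succ) ω - A (sv i.castSucc) ω)) + c) := by
          congr 1; funext ω; exact hinnerval (X ω)
      _ = sublinearE 𝔓 (fun ω =>
            ∑ i : Fin n, ε (i:ℕ) * (A (sv i.succ) ω - A (sv i.castSucc) ω)) + c :=
          sublinearE_add_const h𝔓 hprob hsumint hsumbd
      _ = (∑ i : Fin n, (if ε (i:ℕ) = 1 then sublinearE 𝔓 (A (sv i.succ - sv i.castSucc))
            else sublinearE 𝔓 (fun ω => -A (sv i.succ - sv i.castSucc) ω))) + c := by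
          rw [ih sv ε hsv_mono (by simpa [hsvdef] using (hmem 0).1)
            (by simpa [hsvdef] using (hmem p).2) hε]
      _ = ∑ i : Fin (n+1), (if ε (i:ℕ) = 1 then sublinearE 𝔓 (A (u i.succ - u i.castSucc))
            else sublinearE 𝔓 (fun ω => -A (u i.succ - u i.castSucc) ω)) := by
          rw [Fin.sum_univ_castSucc]
          congr 1

lemma A_zero (hA : ∀ t ω, A t ω = ∫ s in (0:ℝ)..t, h s ω) (ω : Ω) : A 0 ω = 0 := by
  rw [hA]; exact intervalIntegral.integral_same

lemma fE_additive (h𝔓 : 𝔓.Nonempty) (hprob : ∀ P ∈ 𝔓, IsProbabilityMeasure P)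
    (hh : MemM1 𝔓 T h) (hA : ∀ t ω, A t ω = ∫ s in (0:ℝ)..t, h s ω)
    (hAint : ∀ t ∈ Set.Icc (0:ℝ) T, ∀ P ∈ 𝔓, Integrable (A t) P)
    (hstat : HasStationaryIncrements 𝔓 T A) (hind : HasIndepIncrements 𝔓 T A)
    {s t : ℝ} (h0 : 0 ≤ s) (hst : s ≤ t) (htT : t ≤ T) :
    sublinearE 𝔓 (A t) = sublinearE 𝔓 (A s) + sublinearE 𝔓 (A (t - s)) := by
  have hu : Monotone (![0, s, t] : Fin 3 → ℝ) := by
    rw [Fin.monotone_iff_le_succ]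
    intro i
    fin_cases i <;> simp <;> linarith
  have hks := key_sum h𝔓 hprob hh hA hAint hstat hind 2 ![0, s, t] (fun _ => 1) hu
    (by simp) (by simpa using htT) (fun _ => Or.inl rfl)
  have hL : (fun ω => ∑ i : Fin 2, (1:ℝ) *
      (A ((![0, s, t] : Fin 3 → ℝ) i.succ) ω - A ((![0, s, t] : Fin 3 → ℝ) i.castSucc) ω)) =
      A t := by
    funext ω
    rw [Fin.sum_univ_two]
    simp [A_zero hA ω]
  rw [hL] at hks
  rw [hks, Fin.sum_univ_two]
  simp

lemma gE_additive (h𝔓 : 𝔓.Nonempty) (hprob : ∀ P ∈ 𝔓, IsProbabilityMeasure P)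
    (hh : MemM1 𝔓 T h) (hA : ∀ t ω, A t ω = ∫ s in (0:ℝ)..t, h s ω)
    (hAint : ∀ t ∈ Set.Icc (0:ℝ) T, ∀ P ∈ 𝔓, Integrable (A t) P)
    (hstat : HasStationaryIncrements 𝔓 T A) (hind : HasIndepIncrements 𝔓 T A)
    {s t : ℝ} (h0 : 0 ≤ s) (hst : s ≤ t) (htT : t ≤ T) :
    sublinearE 𝔓 (fun ω => -A t ω) = sublinearE 𝔓 (fun ω => -A s ω) +
      sublinearE 𝔓 (fun ω => -A (t - s) ω) := by
  have hu : Monotone (![0, s, t] : Fin 3 → ℝ) := by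
    rw [Fin.monotone_iff_le_succ]
    intro i
    fin_cases i <;> simp <;> linarith
  have hks := key_sum h𝔓 hprob hh hA hAint hstat hind 2 ![0, s, t] (fun _ => -1) hu
    (by simp) (by simpa using htT) (fun _ => Or.inr rfl)
  have hL : (fun ω => ∑ i : Fin 2, (-1:ℝ) *
      (A ((![0, s, t] : Fin 3 → ℝ) i.succ) ω - A ((![0, s, t] : Fin 3 → ℝ) i.castSucc) ω)) =
      fun ω => -A t ω := by
    funext ω
    rw [Fin.sum_univ_two]
    simp [A_zero hA ω]
    ring
  rw [hL] at hks
  rw [hks, Fin.sum_univ_two]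
  norm_num
  rfl

lemma fE_small (h𝔓 : 𝔓.Nonempty) (hprob : ∀ P ∈ 𝔓, IsProbabilityMeasure P)
    (hh : MemM1 𝔓 T h) (hA : ∀ t ω, A t ω = ∫ s in (0:ℝ)..t, h s ω)
    {ε : ℝ} (hε : 0 < ε) :
    ∃ C : ℝ, 0 ≤ C ∧ ∀ t, 0 ≤ t → t ≤ T →
      (|sublinearE 𝔓 (A t)| ≤ C * t + ε ∧ |sublinearE 𝔓 (fun ω => -A t ω)| ≤ C * t + ε) := by
  obtain ⟨C, hC0, hC⟩ := modulus hprob hh hA hε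
  refine ⟨C, hC0, fun t ht0 htT => ?_⟩
  have hb : ∀ P ∈ 𝔓, |∫ ω, A t ω ∂P| ≤ C * t + ε := by
    intro P hP
    have := hC 0 t le_rfl ht0 htT P hP
    rw [sub_zero] at this
    have heq : (fun ω => A t ω - A 0 ω) = A t := by
      funext ω; rw [A_zero hA ω, sub_zero]
    rwa [heq] at this
  constructor
  · exact abs_sublinearE_le h𝔓 hb
  · refine abs_sublinearE_le h𝔓 fun P hP => ?_
    rw [integral_neg, abs_neg]
    exact hb P hP

set_option maxHeartbeats 2000000 in
lemma mean_certain (h𝔓 : 𝔓.Nonempty) (hprob : ∀ P ∈ 𝔓, IsProbabilityMeasure P)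
    (hT : 0 < T) (hh : MemM1 𝔓 T h) (hA : ∀ t ω, A t ω = ∫ s in (0:ℝ)..t, h s ω)
    (hAint : ∀ t ∈ Set.Icc (0:ℝ) T, ∀ P ∈ 𝔓, Integrable (A t) P)
    (hstat : HasStationaryIncrements 𝔓 T A) (hind : HasIndepIncrements 𝔓 T A) :
    sublinearE 𝔓 (A T) + sublinearE 𝔓 (fun ω => -A T ω) = 0 := by
  have hAT0 : (fun ω => A T ω - A 0 ω) = A T := by
    funext ω; rw [A_zero hA, sub_zero]
  -- linearity of the upper and lower means
  have hflin : ∀ t, 0 ≤ t → t ≤ T → sublinearE 𝔓 (A t) = t / T * sublinearE 𝔓 (A T) := by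
    refine linear_of_additive hT
      (fun s t h0 hst htT => fE_additive h𝔓 hprob hh hA hAint hstat hind h0 hst htT) ?_
    intro ε hε
    obtain ⟨C, hC0, hC⟩ := fE_small h𝔓 hprob hh hA hε
    exact ⟨C, hC0, fun t h1 h2 => (hC t h1 h2).1⟩
  have hglin : ∀ t, 0 ≤ t → t ≤ T →
      sublinearE 𝔓 (fun ω => -A t ω) = t / T * sublinearE 𝔓 (fun ω => -A T ω) := by
    refine linear_of_additive hT
      (fun s t h0 hst htT => gE_additive h𝔓 hprob hh hA hAint hstat hind h0 hst htT) ?_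
    intro ε hε
    obtain ⟨C, hC0, hC⟩ := fE_small h𝔓 hprob hh hA hε
    exact ⟨C, hC0, fun t h1 h2 => (hC t h1 h2).2⟩
  -- lower bound : 0 ≤ fE T + gE T
  have hb : ∀ P ∈ 𝔓, ∫ ω, A T ω ∂P ≤ (M1norm 𝔓 T h).toReal := by
    intro P hP
    have h1 := absE_incr_le hh hA le_rfl hT.le le_rfl hP
    rw [hAT0] at h1
    exact (abs_le.1 h1).2
  have hbneg : ∀ P ∈ 𝔓, ∫ ω, -A T ω ∂P ≤ (M1norm 𝔓 T h).toReal := by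
    intro P hP
    have h1 := absE_incr_le hh hA le_rfl hT.le le_rfl hP
    rw [hAT0] at h1
    rw [integral_neg]
    linarith [(abs_le.1 h1).1]
  have hge : 0 ≤ sublinearE 𝔓 (A T) + sublinearE 𝔓 (fun ω => -A T ω) := by
    obtain ⟨P, hP⟩ := h𝔓
    have h1 : ∫ ω, A T ω ∂P ≤ sublinearE 𝔓 (A T) := le_sublinearE hb hP
    have h2 : ∫ ω, -A T ω ∂P ≤ sublinearE 𝔓 (fun ω => -A T ω) := le_sublinearE hbneg hP
    rw [integral_neg] at h2
    linarith
  -- upper bound : for every ε > 0, fE T + gE T ≤ 2 ε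
  have hle : ∀ ε : ℝ, 0 < ε → sublinearE 𝔓 (A T) + sublinearE 𝔓 (fun ω => -A T ω) ≤ 2 * ε := by
    intro ε hε
    obtain ⟨ζ, hζstep, hζnorm⟩ := hh.2.2 (ENNReal.ofReal ε) (ENNReal.ofReal_pos.2 hε)
    obtain ⟨N, tp, ξs, htp0, htpT, htpmono, hξmeas, hξbdd, hζeq⟩ := hζstep
    set Cb : Fin N → ℝ := fun j => max (Classical.choose (hξbdd j)) 0 with hCbdef
    have hCb : ∀ j ω, |ξs j ω| ≤ Cb j := fun j ω =>
      (Classical.choose_spec (hξbdd j) ω).trans (le_max_left _ _)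
    have hζsf : ζ = stepFun tp ξs := by funext u ω; exact hζeq u ω
    have hζm : Measurable (Function.uncurry ζ) := by
      rw [hζsf]; exact stepFun_uncurry_measurable hξmeas
    set η : ℝ → Ω → ℝ := fun u ω => h u ω - ζ u ω with hηdef
    have hηm : Measurable (Function.uncurry η) := hh.1.sub hζm
    -- the extended partition and midpoint grid
    set tp' : ℕ → ℝ := fun j => tp ⟨min j N, by omega⟩ with htp'def
    have htp'eq : ∀ j : ℕ, j ≤ N → ∀ (hj : j < N + 1), tp' j = tp ⟨j, hj⟩ := by
      intro j hj hj'
      rw [htp'def]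
      dsimp only
      congr 1
      apply Fin.ext
      exact Nat.min_eq_left hj
    have htp'mono : Monotone tp' := by
      intro a b hab
      exact htpmono.monotone (by simp only [Fin.mk_le_mk]; omega)
    have htp'0 : tp' 0 = 0 := by rw [htp'eq 0 (by omega) (by omega)]; exact htp0
    have htp'N : tp' N = T := by
      rw [htp'eq N (by omega) (by omega)]; exact htpT
    have htp'mem : ∀ j, 0 ≤ tp' j ∧ tp' j ≤ T := by
      intro j
      constructor
      · rw [← htp'0]; exact htp'mono (Nat.zero_le j)
      · rw [← htp'N, htp'def]
        exact htpmono.monotone (by simp only [Fin.mk_le_mk]; omega)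
    set u' : ℕ → ℝ := fun j => (tp' (j / 2) + tp' ((j + 1) / 2)) / 2 with hu'def
    have hu'mono : Monotone u' := by
      intro a b hab
      have h1 := htp'mono (Nat.div_le_div_right (c := 2) hab)
      have h2 := htp'mono (Nat.div_le_div_right (c := 2) (by omega : a + 1 ≤ b + 1))
      rw [hu'def]
      dsimp only
      linarith
    have hu'mem : ∀ j, 0 ≤ u' j ∧ u' j ≤ T := by
      intro j
      have h1 := htp'mem (j / 2)
      have h2 := htp'mem ((j + 1) / 2)
      rw [hu'def]
      constructor <;> dsimp only <;> linarith
    have hu'0 : u' 0 = 0 := by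
      have : (0:ℕ)/2 = 0 := by omega
      have h01 : (0+1)/2 = 0 := by omega
      simp only [hu'def, this, h01, htp'0]
      norm_num
    have hu'top : u' (2*N) = T := by
      rw [hu'def]; dsimp only
      rw [show 2*N/2 = N by omega, show (2*N+1)/2 = N by omega, htp'N]; ring
    set u : Fin (2*N+1) → ℝ := fun j => u' j.val with hudef
    set sgn : ℕ → ℝ := fun i => if i % 2 = 0 then (1:ℝ) else -1 with hsgndef
    have hsgnpm : ∀ i, sgn i = 1 ∨ sgn i = -1 := by
      intro i; rw [hsgndef]; dsimp only; split <;> simp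
    have hks := key_sum h𝔓 hprob hh hA hAint hstat hind (2*N) u sgn
      (fun a b hab => hu'mono hab) (by simpa [hudef, hu'0] using le_rfl)
      (by simpa [hudef, Fin.val_last] using hu'top.le) hsgnpm
    -- evaluate the right-hand side of hks
    have hRHSrange : (∑ i : Fin (2*N), (if sgn (i:ℕ) = 1 then
        sublinearE 𝔓 (A (u i.succ - u i.castSucc))
        else sublinearE 𝔓 (fun ω => -A (u i.succ - u i.castSucc) ω))) =
        ∑ i ∈ Finset.range (2*N), (if sgn i = 1 then
          sublinearE 𝔓 (A (u' (i+1) - u' i))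
          else sublinearE 𝔓 (fun ω => -A (u' (i+1) - u' i) ω)) :=
      Fin.sum_univ_eq_sum_range (fun i => if sgn i = 1 then
          sublinearE 𝔓 (A (u' (i+1) - u' i))
          else sublinearE 𝔓 (fun ω => -A (u' (i+1) - u' i) ω)) (2*N)
    have hRHSval : (∑ i ∈ Finset.range (2*N), (if sgn i = 1 then
          sublinearE 𝔓 (A (u' (i+1) - u' i))
          else sublinearE 𝔓 (fun ω => -A (u' (i+1) - u' i) ω))) =
        (sublinearE 𝔓 (A T) + sublinearE 𝔓 (fun ω => -A T ω)) / 2 := by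
      rw [sum_range_two_mul]
      have hterm : ∀ j ∈ Finset.range N,
          ((if sgn (2*j) = 1 then sublinearE 𝔓 (A (u' (2*j+1) - u' (2*j)))
            else sublinearE 𝔓 (fun ω => -A (u' (2*j+1) - u' (2*j)) ω)) +
           (if sgn (2*j+1) = 1 then sublinearE 𝔓 (A (u' (2*j+1+1) - u' (2*j+1)))
            else sublinearE 𝔓 (fun ω => -A (u' (2*j+1+1) - u' (2*j+1)) ω))) =
          ((tp' (j+1) - tp' j) / 2) / T *
            (sublinearE 𝔓 (A T) + sublinearE 𝔓 (fun ω => -A T ω)) := by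
        intro j hj
        have hs1 : sgn (2*j) = 1 := by rw [hsgndef]; simp [Nat.mul_mod_right]
        have hs2 : sgn (2*j+1) ≠ 1 := by
          rw [hsgndef]; dsimp only
          rw [if_neg (by omega)]; norm_num
        rw [if_pos hs1, if_neg hs2]
        have e1 : u' (2*j) = tp' j := by
          rw [hu'def]; dsimp only
          rw [show 2*j/2 = j by omega, show (2*j+1)/2 = j by omega]; ring
        have e2 : u' (2*j+1) = (tp' j + tp' (j+1)) / 2 := by
          rw [hu'def]; dsimp only
          rw [show (2*j+1)/2 = j by omega, show (2*j+1+1)/2 = j+1 by omega]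
        have e3 : u' (2*j+1+1) = tp' (j+1) := by
          rw [hu'def]; dsimp only
          rw [show (2*j+1+1)/2 = j+1 by omega, show (2*j+1+1+1)/2 = j+1 by omega]; ring
        have hδ1 : u' (2*j+1) - u' (2*j) = (tp' (j+1) - tp' j) / 2 := by
          rw [e1, e2]; ring
        have hδ2 : u' (2*j+1+1) - u' (2*j+1) = (tp' (j+1) - tp' j) / 2 := by
          rw [e2, e3]; ring
        have hδ0 : 0 ≤ (tp' (j+1) - tp' j) / 2 := by
          have := htp'mono (Nat.le_succ j); linarith
        have hδT : (tp' (j+1) - tp' j) / 2 ≤ T := by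
          have h1 := htp'mem j
          have h2 := htp'mem (j+1)
          linarith
        rw [hδ1, hδ2, hflin _ hδ0 hδT, hglin _ hδ0 hδT]
        ring
      rw [Finset.sum_congr rfl hterm]
      have hps : ∀ j ∈ Finset.range N, ((tp' (j+1) - tp' j) / 2) / T *
          (sublinearE 𝔓 (A T) + sublinearE 𝔓 (fun ω => -A T ω)) =
          (tp' (j+1) - tp' j) *
            ((sublinearE 𝔓 (A T) + sublinearE 𝔓 (fun ω => -A T ω)) / (2 * T)) :=
        fun j _ => by ring
      rw [Finset.sum_congr rfl hps, ← Finset.sum_mul, Finset.sum_range_sub tp',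
        htp'N, htp'0, sub_zero]
      field_simp
    -- bound the left-hand side of hks by ε
    have hLHSle : sublinearE 𝔓 (fun ω => ∑ i : Fin (2*N), sgn (i:ℕ) *
        (A (u i.succ) ω - A (u i.castSucc) ω)) ≤ ε := by
      refine sublinearE_le h𝔓 ?_
      intro P hP
      have habs : |∫ ω, (∑ i : Fin (2*N), sgn (i:ℕ) *
          (A (u i.succ) ω - A (u i.castSucc) ω)) ∂P| ≤ (ENNReal.ofReal ε).toReal := by
        refine abs_integral_le_toReal (g := Gv T η) ENNReal.ofReal_ne_top ?_
          ((lint_Gv_le P hP).trans hζnorm.le)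
        have hηfin : ∫⁻ ω, Gv T η ω ∂P < ⊤ :=
          ((lint_Gv_le P hP).trans_lt hζnorm).trans ENNReal.ofReal_lt_top
        filter_upwards [ae_good hh hP, ae_Gv_lt_top hηm hηfin] with ω hω hηω
        have hηio : IntegrableOn (fun v => η v ω) (Set.Ioc (0:ℝ) T) volume :=
          integrableOn_of_Gv_lt_top hηm hηω
        -- rewrite the sum over the range
        have hsr : (∑ i : Fin (2*N), sgn (i:ℕ) * (A (u i.succ) ω - A (u i.castSucc) ω)) =
            ∑ i ∈ Finset.range (2*N), sgn i * (A (u' (i+1)) ω - A (u' i) ω) :=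
          Fin.sum_univ_eq_sum_range
            (fun i => sgn i * (A (u' (i+1)) ω - A (u' i) ω)) (2*N)
        rw [hsr]
        -- decompose each increment
        have hterm : ∀ i ∈ Finset.range (2*N), sgn i * (A (u' (i+1)) ω - A (u' i) ω) =
            sgn i * (∫ v in Set.Ioc (u' i) (u' (i+1)), η v ω) +
            sgn i * (∫ v in Set.Ioc (u' i) (u' (i+1)), stepFun tp ξs v ω) := by
          intro i _
          have h0i := (hu'mem i).1
          have hii := hu'mono (Nat.le_succ i)
          have hiT := (hu'mem (i+1)).2
          have hinc := incr_eq hω h0i hii hiT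
          rw [hA (u' (i+1)) ω, hA (u' i) ω, hinc]
          have hsub : Set.Ioc (u' i) (u' (i+1)) ⊆ Set.Ioc (0:ℝ) T :=
            Set.Ioc_subset_Ioc h0i hiT
          have hsplit : ∫ v in Set.Ioc (u' i) (u' (i+1)), h v ω =
              (∫ v in Set.Ioc (u' i) (u' (i+1)), η v ω) +
                ∫ v in Set.Ioc (u' i) (u' (i+1)), stepFun tp ξs v ω := by
            rw [← integral_add (hηio.mono_set hsub)
              (stepFun_integrableOn hξmeas hCb ω _ _)]
            congr 1; funext v
            rw [hηdef]; simp [hζsf.symm]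
          rw [hsplit]; ring
        rw [Finset.sum_congr rfl hterm, Finset.sum_add_distrib]
        -- the step-process part cancels
        have hζzero : (∑ i ∈ Finset.range (2*N),
            sgn i * ∫ v in Set.Ioc (u' i) (u' (i+1)), stepFun tp ξs v ω) = 0 := by
          rw [sum_range_two_mul]
          refine Finset.sum_eq_zero fun j hj => ?_
          have hjN : j < N := Finset.mem_range.1 hj
          have hs1 : sgn (2*j) = 1 := by rw [hsgndef]; simp [Nat.mul_mod_right]
          have hs2 : sgn (2*j+1) = -1 := by
            rw [hsgndef]; dsimp only; rw [if_neg (by omega)]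
          have e1 : u' (2*j) = tp' j := by
            rw [hu'def]; dsimp only
            rw [show 2*j/2 = j by omega, show (2*j+1)/2 = j by omega]; ring
          have e2 : u' (2*j+1) = (tp' j + tp' (j+1)) / 2 := by
            rw [hu'def]; dsimp only
            rw [show (2*j+1)/2 = j by omega, show (2*j+1+1)/2 = j+1 by omega]
          have e3 : u' (2*j+1+1) = tp' (j+1) := by
            rw [hu'def]; dsimp only
            rw [show (2*j+1+1)/2 = j+1 by omega, show (2*j+1+1+1)/2 = j+1 by omega]; ring
          have hmono_j := htp'mono (Nat.le_succ j)
          set j0 : Fin N := ⟨j, hjN⟩ with hj0def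
          have hc1 : tp j0.castSucc = tp' j := (htp'eq j (by omega) _).symm
          have hc2 : tp j0.succ = tp' (j+1) := (htp'eq (j+1) (by omega) _).symm
          have hint1 : ∫ v in Set.Ioc (u' (2*j)) (u' (2*j+1)), stepFun tp ξs v ω =
              ξs j0 ω * ((tp' (j+1) - tp' j) / 2) := by
            rw [stepFun_setIntegral_eq htpmono hξmeas hCb ω j0
              (by rw [hc1, e1]) (hu'mono (Nat.le_succ _)) (by rw [hc2, e2]; linarith),
              e1, e2]
            ring_nf
          have hint2 : ∫ v in Set.Ioc (u' (2*j+1)) (u' (2*j+1+1)), stepFun tp ξs v ω =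
              ξs j0 ω * ((tp' (j+1) - tp' j) / 2) := by
            rw [stepFun_setIntegral_eq htpmono hξmeas hCb ω j0
              (by rw [hc1, e2]; linarith) (hu'mono (Nat.le_succ _)) (by rw [hc2, e3]),
              e2, e3]
            ring_nf
          rw [hs1, hs2, hint1, hint2]
          ring
        rw [hζzero, add_zero]
        -- now bound the η part in `ℝ≥0∞`
        calc ENNReal.ofReal |∑ i ∈ Finset.range (2*N),
              sgn i * ∫ v in Set.Ioc (u' i) (u' (i+1)), η v ω|
            ≤ ENNReal.ofReal (∑ i ∈ Finset.range (2*N),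
              |∫ v in Set.Ioc (u' i) (u' (i+1)), η v ω|) := by
              refine ENNReal.ofReal_le_ofReal ?_
              refine (Finset.abs_sum_le_sum_abs _ _).trans ?_
              refine Finset.sum_le_sum fun i _ => ?_
              rw [abs_mul]
              rcases hsgnpm i with h1 | h1 <;> rw [h1] <;> norm_num
          _ = ∑ i ∈ Finset.range (2*N),
              ENNReal.ofReal |∫ v in Set.Ioc (u' i) (u' (i+1)), η v ω| :=
              ENNReal.ofReal_sum_of_nonneg fun i _ => abs_nonneg _
          _ ≤ ∑ i ∈ Finset.range (2*N),
              ∫⁻ v in Set.Ioc (u' i) (u' (i+1)), ENNReal.ofReal |η v ω| :=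
              Finset.sum_le_sum fun i _ => ofReal_abs_setIntegral_le _ _
          _ = ∫⁻ v in Set.Ioc (u' 0) (u' (2*N)), ENNReal.ofReal |η v ω| :=
              sum_lintegral_Ioc hu'mono (2*N)
          _ = Gv T η ω := by rw [hu'0, hu'top]; rfl
      calc ∫ ω, (∑ i : Fin (2*N), sgn (i:ℕ) *
            (A (u i.succ) ω - A (u i.castSucc) ω)) ∂P
          ≤ |∫ ω, (∑ i : Fin (2*N), sgn (i:ℕ) *
            (A (u i.succ) ω - A (u i.castSucc) ω)) ∂P| := le_abs_self _
        _ ≤ (ENNReal.ofReal ε).toReal := habs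
        _ = ε := ENNReal.toReal_ofReal hε.le
    rw [hks, hRHSrange, hRHSval] at hLHSle
    linarith
  -- conclude
  have hle0 : sublinearE 𝔓 (A T) + sublinearE 𝔓 (fun ω => -A T ω) ≤ 0 := by
    refine le_of_forall_pos_le_add ?_
    intro ε hε
    have := hle (ε / 2) (by linarith)
    linarith
  linarith

end Core

end SKW

/-- if `A_t = ∫₀ᵗ h_s ds` with `h ∈ M¹(𝔓)` has stationary and independent
increments under `Ê`, then with `c = Ê(A_T)/T` one has
`Ê(A_t − A_s) = −Ê(−(A_t − A_s)) = c(t−s)` for all `0 ≤ s ≤ t ≤ T`. -/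
theorem stmt0 (𝔓 : Set (Measure Ω)) (h𝔓 : 𝔓.Nonempty)
    (hprob : ∀ P ∈ 𝔓, IsProbabilityMeasure P)
    (T : ℝ) (hT : 0 < T)
    (h : ℝ → Ω → ℝ) (hh : MemM1 𝔓 T h)
    (A : ℝ → Ω → ℝ) (hA : ∀ t ω, A t ω = ∫ s in (0:ℝ)..t, h s ω)
    (hAint : ∀ t ∈ Set.Icc (0:ℝ) T, ∀ P ∈ 𝔓, Integrable (A t) P)
    (hstat : HasStationaryIncrements 𝔓 T A)
    (hind : HasIndepIncrements 𝔓 T A) :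
    ∀ s t : ℝ, 0 ≤ s → s ≤ t → t ≤ T →
      sublinearE 𝔓 (fun ω => A t ω - A s ω) = sublinearE 𝔓 (A T) / T * (t - s) ∧
      -sublinearE 𝔓 (fun ω => -(A t ω - A s ω)) = sublinearE 𝔓 (A T) / T * (t - s) := by
  have hcert := SKW.mean_certain h𝔓 hprob hT hh hA hAint hstat hind
  have hflin : ∀ t, 0 ≤ t → t ≤ T →
      sublinearE 𝔓 (A t) = t / T * sublinearE 𝔓 (A T) := by
    refine SKW.linear_of_additive hT
      (fun s t h0 hst htT => SKW.fE_additive h𝔓 hprob hh hA hAint hstat hind h0 hst htT) ?_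
    intro ε hε
    obtain ⟨C, hC0, hC⟩ := SKW.fE_small h𝔓 hprob hh hA hε
    exact ⟨C, hC0, fun t h1 h2 => (hC t h1 h2).1⟩
  have hglin : ∀ t, 0 ≤ t → t ≤ T →
      sublinearE 𝔓 (fun ω => -A t ω) = t / T * sublinearE 𝔓 (fun ω => -A T ω) := by
    refine SKW.linear_of_additive hT
      (fun s t h0 hst htT => SKW.gE_additive h𝔓 hprob hh hA hAint hstat hind h0 hst htT) ?_
    intro ε hε
    obtain ⟨C, hC0, hC⟩ := SKW.fE_small h𝔓 hprob hh hA hε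
    exact ⟨C, hC0, fun t h1 h2 => (hC t h1 h2).2⟩
  intro s t hs hst htT
  have h0ts : 0 ≤ t - s := by linarith
  have htsT : t - s ≤ T := by linarith
  constructor
  · rw [SKW.stat_incr hstat hAint hs hst htT, hflin (t - s) h0ts htsT]
    ring
  · rw [SKW.stat_incr_neg hstat hAint hs hst htT, hglin (t - s) h0ts htsT]
    have : sublinearE 𝔓 (fun ω => -A T ω) = -sublinearE 𝔓 (A T) := by linarith
    rw [this]
    ring
end
end

section
/- Let h ∈ M¹(𝒫), A_t := ∫₀ᵗ h_s ds, and suppose (A_t)_{t∈[0,T]} has stationary and independent increments under Ê. Set c̄ := Ê(A_T)/T and c̲ := −Ê(−A_T)/T. Then for every integer n ≥ 1, ‖h − h^{T/(2n),0}‖_{M¹} ≥ (c̄ − c̲)(n−1)T/(2n), where h^{T/(2n),0} is the block average of h with block size ε = T/(2n). -/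
open MeasureTheory Filter
open scoped ENNReal

noncomputable section

variable {Ω : Type*} [MeasurableSpace Ω]

/-- The block average `η^{ε,0}` of a process `η`:
`η^{ε,0}_t = Σ_{k=1}^{k_ε−1} (ε⁻¹ ∫_{(k−1)ε}^{kε} η_s ds) 1_{(kε,(k+1)ε]}(t)`,
where `k_ε = ⌊T/ε⌋`. -/
def blockAvg (T ε : ℝ) (η : ℝ → Ω → ℝ) (t : ℝ) (ω : Ω) : ℝ :=
  ∑ k ∈ Finset.Ico 1 (Nat.floor (T / ε)),
    (ε⁻¹ * ∫ s in (((k : ℝ) - 1) * ε)..((k : ℝ) * ε), η s ω) *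
      Set.indicator (Set.Ioc ((k : ℝ) * ε) (((k : ℝ) + 1) * ε)) (fun _ => (1:ℝ)) t

/-- The moving average `η^ε_t = ε⁻¹ ∫_{(t−ε)⁺}^t η_s ds` of a process `η`. -/
def movAvg (ε : ℝ) (η : ℝ → Ω → ℝ) (t : ℝ) (ω : Ω) : ℝ :=
  ε⁻¹ * ∫ s in (max (t - ε) 0)..t, η s ω

lemma ciSup_add_const {ι : Sort*} [Nonempty ι] (g : ι → ℝ) (hb : BddAbove (Set.range g))
    (c : ℝ) : (⨆ i, c + g i) = c + ⨆ i, g i := by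
  obtain ⟨M, hM⟩ := hb
  have hb2 : BddAbove (Set.range fun i => c + g i) :=
    ⟨c + M, by rintro x ⟨i, rfl⟩; exact add_le_add_right (hM ⟨i, rfl⟩) c⟩
  apply le_antisymm
  · exact ciSup_le fun i => add_le_add_right (le_ciSup ⟨M, hM⟩ i) c
  · have h2 : (⨆ i, g i) ≤ (⨆ i, c + g i) - c :=
      ciSup_le fun i => le_sub_iff_add_le.2 (by rw [add_comm]; exact le_ciSup hb2 i)
    linarith

lemma sublinearE_congr (𝔓 : Set (Measure Ω)) {f g : Ω → ℝ} (h : ∀ ω, f ω = g ω) :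
    sublinearE 𝔓 f = sublinearE 𝔓 g := by
  have : f = g := funext h
  rw [this]

lemma sublinearE_zero (𝔓 : Set (Measure Ω)) (h𝔓 : 𝔓.Nonempty) :
    sublinearE 𝔓 (fun _ => (0:ℝ)) = 0 := by
  have : Nonempty ↥𝔓 := h𝔓.to_subtype
  simp [sublinearE]

lemma sublinearE_const_add (𝔓 : Set (Measure Ω)) (h𝔓 : 𝔓.Nonempty)
    (hprob : ∀ P ∈ 𝔓, IsProbabilityMeasure P) (f : Ω → ℝ)
    (hf : ∀ P ∈ 𝔓, Integrable f P)
    (hbdd : BddAbove (Set.range fun P : 𝔓 => ∫ ω, f ω ∂(P : Measure Ω))) (c : ℝ) :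
    sublinearE 𝔓 (fun ω => c + f ω) = c + sublinearE 𝔓 f := by
  have : Nonempty ↥𝔓 := h𝔓.to_subtype
  have heq : ∀ P : 𝔓, ∫ ω, (c + f ω) ∂(P : Measure Ω) = c + ∫ ω, f ω ∂(P : Measure Ω) := by
    intro P
    have := hprob P P.2
    rw [integral_add (integrable_const c) (hf P P.2), integral_const]
    simp
  unfold sublinearE
  rw [show (fun P : 𝔓 => ∫ ω, (c + f ω) ∂(P : Measure Ω))
      = fun P : 𝔓 => c + ∫ ω, f ω ∂(P : Measure Ω) from funext heq]
  exact ciSup_add_const _ hbdd c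

lemma clip_linear {m k : ℕ} (a : Fin m → ℝ) (b : Fin k → ℝ) :
    CLLip (fun z : (Fin m → ℝ) × (Fin k → ℝ) => (∑ i, a i * z.1 i) + (∑ i, b i * z.2 i)) := by
  refine ⟨(∑ i, |a i|) + (∑ i, |b i|), 0, fun x y => ?_⟩
  have hC0 : 0 ≤ (∑ i, |a i|) + (∑ i, |b i|) :=
    add_nonneg (Finset.sum_nonneg fun i _ => abs_nonneg _)
      (Finset.sum_nonneg fun i _ => abs_nonneg _)
  have key : |((∑ i, a i * x.1 i) + (∑ i, b i * x.2 i)) -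
      ((∑ i, a i * y.1 i) + (∑ i, b i * y.2 i))| ≤
      ((∑ i, |a i|) + (∑ i, |b i|)) * ‖x - y‖ := by
    have h1 : ((∑ i, a i * x.1 i) + (∑ i, b i * x.2 i)) -
        ((∑ i, a i * y.1 i) + (∑ i, b i * y.2 i)) =
        (∑ i, a i * (x.1 i - y.1 i)) + (∑ i, b i * (x.2 i - y.2 i)) := by
      rw [show ∀ A B C D : ℝ, A + B - (C + D) = (A - C) + (B - D) from fun _ _ _ _ => by ring,
        ← Finset.sum_sub_distrib, ← Finset.sum_sub_distrib]
      congr 1 <;> exact Finset.sum_congr rfl fun i _ => by ring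
    rw [h1]
    calc |(∑ i, a i * (x.1 i - y.1 i)) + (∑ i, b i * (x.2 i - y.2 i))|
        ≤ |∑ i, a i * (x.1 i - y.1 i)| + |∑ i, b i * (x.2 i - y.2 i)| := abs_add_le _ _
      _ ≤ (∑ i, |a i * (x.1 i - y.1 i)|) + (∑ i, |b i * (x.2 i - y.2 i)|) :=
          add_le_add (Finset.abs_sum_le_sum_abs _ _) (Finset.abs_sum_le_sum_abs _ _)
      _ ≤ (∑ i, |a i| * ‖x - y‖) + (∑ i, |b i| * ‖x - y‖) := by
          refine add_le_add (Finset.sum_le_sum fun i _ => ?_)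
            (Finset.sum_le_sum fun i _ => ?_)
          · rw [abs_mul]
            refine mul_le_mul_of_nonneg_left ?_ (abs_nonneg _)
            have h2 : |x.1 i - y.1 i| = ‖(x - y).1 i‖ := by
              simp [Prod.fst_sub, Real.norm_eq_abs]
            rw [h2]
            exact le_trans (norm_le_pi_norm _ i) (norm_fst_le _)
          · rw [abs_mul]
            refine mul_le_mul_of_nonneg_left ?_ (abs_nonneg _)
            have h2 : |x.2 i - y.2 i| = ‖(x - y).2 i‖ := by
              simp [Prod.snd_sub, Real.norm_eq_abs]
            rw [h2]
            exact le_trans (norm_le_pi_norm _ i) (norm_snd_le _)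
      _ = ((∑ i, |a i|) + (∑ i, |b i|)) * ‖x - y‖ := by
          rw [← Finset.sum_mul, ← Finset.sum_mul]; ring
  refine key.trans ?_
  have : (1:ℝ) + ‖x‖ ^ 0 + ‖y‖ ^ 0 = 3 := by norm_num
  rw [this]
  nlinarith [norm_nonneg (x - y)]

lemma sublinearE_indep_add (𝔓 : Set (Measure Ω)) (h𝔓 : 𝔓.Nonempty)
    (hprob : ∀ P ∈ 𝔓, IsProbabilityMeasure P) {m k : ℕ}
    (X : Ω → Fin m → ℝ) (Y : Ω → Fin k → ℝ) (hXY : IndepOf 𝔓 Y X)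
    (a : Fin m → ℝ) (b : Fin k → ℝ)
    (hXint : ∀ i, ∀ P ∈ 𝔓, Integrable (fun ω => X ω i) P)
    (hYint : ∀ i, ∀ P ∈ 𝔓, Integrable (fun ω => Y ω i) P)
    (M : ℝ) (hM : 0 ≤ M)
    (hXb : ∀ P ∈ 𝔓, ∀ i, ∫ ω, |X ω i| ∂P ≤ M)
    (hYb : ∀ P ∈ 𝔓, ∀ i, ∫ ω, |Y ω i| ∂P ≤ M) :
    sublinearE 𝔓 (fun ω => (∑ i, a i * X ω i) + (∑ i, b i * Y ω i)) =
      sublinearE 𝔓 (fun ω => ∑ i, a i * X ω i) +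
        sublinearE 𝔓 (fun ω => ∑ i, b i * Y ω i) := by
  have hnon : Nonempty ↥𝔓 := h𝔓.to_subtype
  have intSumX : ∀ P ∈ 𝔓, Integrable (fun ω => ∑ i, a i * X ω i) P := fun P hP =>
    integrable_finset_sum _ fun i _ => (hXint i P hP).const_mul _
  have intSumY : ∀ P ∈ 𝔓, Integrable (fun ω => ∑ i, b i * Y ω i) P := fun P hP =>
    integrable_finset_sum _ fun i _ => (hYint i P hP).const_mul _
  -- generic bound
  have bound : ∀ (l : ℕ) (c : Fin l → ℝ) (Z : Ω → Fin l → ℝ)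
      (_ : ∀ i, ∀ P ∈ 𝔓, Integrable (fun ω => Z ω i) P)
      (_ : ∀ P ∈ 𝔓, ∀ i, ∫ ω, |Z ω i| ∂P ≤ M),
      ∀ P ∈ 𝔓, ∫ ω, (∑ i, c i * Z ω i) ∂P ≤ (∑ i, |c i|) * M := by
    intro l c Z hZint hZb P hP
    have hint1 : Integrable (fun ω => ∑ i, c i * Z ω i) P :=
      integrable_finset_sum _ fun i _ => (hZint i P hP).const_mul _
    have hint2 : Integrable (fun ω => ∑ i, |c i| * |Z ω i|) P :=
      integrable_finset_sum _ fun i _ => ((hZint i P hP).abs.const_mul _)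
    calc ∫ ω, (∑ i, c i * Z ω i) ∂P
        ≤ ∫ ω, (∑ i, |c i| * |Z ω i|) ∂P := by
          refine integral_mono hint1 hint2 fun ω => ?_
          calc (∑ i, c i * Z ω i) ≤ |∑ i, c i * Z ω i| := le_abs_self _
            _ ≤ ∑ i, |c i * Z ω i| := Finset.abs_sum_le_sum_abs _ _
            _ = ∑ i, |c i| * |Z ω i| := Finset.sum_congr rfl fun i _ => abs_mul _ _
      _ = ∑ i, |c i| * ∫ ω, |Z ω i| ∂P := by
          rw [integral_finset_sum _ fun i _ => ((hZint i P hP).abs.const_mul _)]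
          exact Finset.sum_congr rfl fun i _ => integral_const_mul _ _
      _ ≤ ∑ i : Fin l, |c i| * M :=
          Finset.sum_le_sum fun i _ =>
            mul_le_mul_of_nonneg_left (hZb P hP i) (abs_nonneg _)
      _ = (∑ i, |c i|) * M := by rw [Finset.sum_mul]
  have bddX : BddAbove (Set.range fun P : 𝔓 => ∫ ω, (∑ i, a i * X ω i) ∂(P : Measure Ω)) := by
    refine ⟨(∑ i, |a i|) * M, ?_⟩
    rintro x ⟨P, rfl⟩
    exact bound m a X hXint hXb P P.2
  have bddY : BddAbove (Set.range fun P : 𝔓 => ∫ ω, (∑ i, b i * Y ω i) ∂(P : Measure Ω)) := by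
    refine ⟨(∑ i, |b i|) * M, ?_⟩
    rintro x ⟨P, rfl⟩
    exact bound k b Y hYint hYb P P.2
  set cY := sublinearE 𝔓 (fun ω => ∑ i, b i * Y ω i) with hcY
  have key1 : ∀ x : Fin m → ℝ,
      sublinearE 𝔓 (fun ω' => (∑ i, a i * x i) + (∑ i, b i * Y ω' i)) =
        (∑ i, a i * x i) + cY := fun x =>
    sublinearE_const_add 𝔓 h𝔓 hprob _ intSumY bddY _
  have happ := hXY (fun z => (∑ i, a i * z.1 i) + (∑ i, b i * z.2 i)) (clip_linear a b)
    (fun P hP => (intSumX P hP).add (intSumY P hP))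
    (fun x P hP => by
      haveI := hprob P hP
      exact (integrable_const (∑ i, a i * x i)).add (intSumY P hP))
    (by
      intro P hP
      have hfun : (fun ω => sublinearE 𝔓
            (fun ω' => (∑ i, a i * X ω i) + (∑ i, b i * Y ω' i)))
          = fun ω => (∑ i, a i * X ω i) + cY := funext fun ω => key1 (X ω)
      rw [hfun]
      haveI := hprob P hP
      exact (intSumX P hP).add (integrable_const cY))
  calc sublinearE 𝔓 (fun ω => (∑ i, a i * X ω i) + (∑ i, b i * Y ω i))
      = sublinearE 𝔓 (fun ω => sublinearE 𝔓
          (fun ω' => (∑ i, a i * X ω i) + (∑ i, b i * Y ω' i))) := happ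
    _ = sublinearE 𝔓 (fun ω => cY + (∑ i, a i * X ω i)) :=
        sublinearE_congr 𝔓 fun ω => by rw [key1 (X ω)]; ring
    _ = cY + sublinearE 𝔓 (fun ω => ∑ i, a i * X ω i) :=
        sublinearE_const_add 𝔓 h𝔓 hprob _ intSumX bddX cY
    _ = _ := by ring

lemma sum_alt (m : ℕ) (u v : ℕ → ℝ) :
    ∑ k ∈ Finset.range (2*m+2), (if k ≤ 1 then 0 else if Even k then u k else v k)
      = ∑ j ∈ Finset.range m, (u (2*j+2) + v (2*j+3)) := by
  induction m with
  | zero => simp [Finset.sum_range_succ]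
  | succ m ih =>
    have h0 : 2*(m+1)+2 = (2*m+2)+1+1 := by ring
    rw [h0, Finset.sum_range_succ, Finset.sum_range_succ, ih, Finset.sum_range_succ]
    have h1 : ¬(2*m+2 ≤ 1) := by omega
    have h2 : Even (2*m+2) := ⟨m+1, by ring⟩
    have h3 : ¬(2*m+2+1 ≤ 1) := by omega
    have h4 : ¬ Even (2*m+2+1) := by
      rw [Nat.even_add_one]; simpa using h2
    rw [if_neg h1, if_pos h2, if_neg h3, if_neg h4]
    have e1 : 2*m+3 = 2*m+2+1 := by ring
    rw [e1]
    ring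

set_option maxHeartbeats 2000000 in
/-- if `A_t = ∫₀ᵗ h_s ds` with `h ∈ M¹(𝔓)` has stationary and independent
increments, then with `c̄ = Ê(A_T)/T` and `c̲ = −Ê(−A_T)/T`, for every `n ≥ 1`,
`‖h − h^{T/(2n),0}‖_{M¹} ≥ (c̄ − c̲)(n−1)T/(2n)`. -/
theorem stmt1 (𝔓 : Set (Measure Ω)) (h𝔓 : 𝔓.Nonempty)
    (hprob : ∀ P ∈ 𝔓, IsProbabilityMeasure P)
    (T : ℝ) (hT : 0 < T)
    (h : ℝ → Ω → ℝ) (hh : MemM1 𝔓 T h)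
    (A : ℝ → Ω → ℝ) (hA : ∀ t ω, A t ω = ∫ s in (0:ℝ)..t, h s ω)
    (hAint : ∀ t ∈ Set.Icc (0:ℝ) T, ∀ P ∈ 𝔓, Integrable (A t) P)
    (hstat : HasStationaryIncrements 𝔓 T A)
    (hind : HasIndepIncrements 𝔓 T A) :
    ∀ n : ℕ, 1 ≤ n →
      ENNReal.ofReal ((sublinearE 𝔓 (A T) / T - (-sublinearE 𝔓 (fun ω => -A T ω) / T)) *
          ((n : ℝ) - 1) * T / (2 * n)) ≤
        M1norm 𝔓 T (fun t ω => h t ω - blockAvg T (T / (2 * n)) h t ω) := by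
  intro n hn
  have hnon : Nonempty ↥𝔓 := h𝔓.to_subtype
  set ε : ℝ := T / (2*(n:ℝ)) with hεdef
  have hnR : (0:ℝ) < n := by exact_mod_cast hn
  have hε : 0 < ε := by positivity
  have hNε : (2*(n:ℝ)) * ε = T := by
    rw [hεdef]; field_simp
  set Δ : ℕ → Ω → ℝ := fun k ω => A (((k:ℝ)+1)*ε) ω - A ((k:ℝ)*ε) ω with hΔdef
  have hmem : ∀ k : ℕ, k ≤ 2*n → ((k:ℝ)*ε ∈ Set.Icc (0:ℝ) T) := by
    intro k hk
    constructor
    · positivity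
    · rw [← hNε]
      have : (k:ℝ) ≤ 2*(n:ℝ) := by exact_mod_cast hk
      nlinarith
  have hΔint : ∀ k : ℕ, k+1 ≤ 2*n → ∀ P ∈ 𝔓, Integrable (Δ k) P := by
    intro k hk P hP
    have h1 := hAint (((k:ℝ)+1)*ε) (by
      have e : ((k:ℝ)+1)*ε = ((k+1:ℕ):ℝ)*ε := by push_cast; ring
      rw [e]; exact hmem (k+1) hk) P hP
    have h2 := hAint _ (hmem k (by omega)) P hP
    exact h1.sub h2
  set M0 : ℝ := (M1norm 𝔓 T h).toReal with hM0def
  -- shared machinery about sections of h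
  have hsec : ∀ ω, Measurable (fun s => h s ω) := fun ω =>
    hh.1.comp (measurable_id.prodMk measurable_const)
  set H : Ω → ℝ≥0∞ := fun ω => ∫⁻ s in Set.Ioc (0:ℝ) T, ENNReal.ofReal |h s ω| with hHdef
  have hHmeas : Measurable H := by
    apply Measurable.lintegral_prod_right
    exact ((hh.1.comp measurable_swap).abs).ennreal_ofReal
  have hHint : ∀ P ∈ 𝔓, ∫⁻ ω, H ω ∂P ≤ M1norm 𝔓 T h := by
    intro P hP
    exact le_iSup (fun Q : 𝔓 => ∫⁻ ω, (∫⁻ t in Set.Ioc (0:ℝ) T,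
      ENNReal.ofReal |h t ω|) ∂(Q : Measure Ω)) ⟨P, hP⟩
  have hHfin : ∀ P ∈ 𝔓, ∀ᵐ ω ∂(P : Measure Ω), H ω < ⊤ := by
    intro P hP
    exact ae_lt_top hHmeas (lt_of_le_of_lt (hHint P hP) hh.2.1).ne
  have hIocT : ∀ ω, H ω < ⊤ → IntegrableOn (fun s => h s ω) (Set.Ioc (0:ℝ) T) volume := by
    intro ω hω
    refine ⟨(hsec ω).aestronglyMeasurable, ?_⟩
    rw [hasFiniteIntegral_iff_norm]
    have heq : ∫⁻ s in Set.Ioc (0:ℝ) T, ENNReal.ofReal ‖h s ω‖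
        = ∫⁻ s in Set.Ioc (0:ℝ) T, ENNReal.ofReal |h s ω| :=
      lintegral_congr fun s => by rw [Real.norm_eq_abs]
    rw [heq]
    exact hω
  have hAdiff : ∀ ω, H ω < ⊤ → ∀ u v : ℝ, 0 ≤ u → u ≤ v → v ≤ T →
      A v ω - A u ω = ∫ s in u..v, h s ω := by
    intro ω hω u v h0u huv hvT
    have hi1 : IntervalIntegrable (fun s => h s ω) volume 0 u := by
      rw [intervalIntegrable_iff_integrableOn_Ioc_of_le h0u]
      exact (hIocT ω hω).mono_set (Set.Ioc_subset_Ioc le_rfl (le_trans huv hvT))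
    have hi2 : IntervalIntegrable (fun s => h s ω) volume u v := by
      rw [intervalIntegrable_iff_integrableOn_Ioc_of_le huv]
      exact (hIocT ω hω).mono_set (Set.Ioc_subset_Ioc h0u hvT)
    have hadd := intervalIntegral.integral_add_adjacent_intervals hi1 hi2
    rw [hA, hA]
    linarith [hadd]
  have hAbound : ∀ P ∈ 𝔓, ∀ t ∈ Set.Icc (0:ℝ) T, ∫ ω, |A t ω| ∂P ≤ M0 := by
    intro P hP t ht
    haveI := hprob P hP
    have hInt := hAint t ht P hP
    have hptw : ∀ᵐ ω ∂(P : Measure Ω), ENNReal.ofReal |A t ω| ≤ H ω := by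
      refine (hHfin P hP).mono fun ω hω => ?_
      have habs : |A t ω| ≤ (H ω).toReal := by
        rw [hA]
        have h1 : |∫ s in (0:ℝ)..t, h s ω| ≤ ∫ s in (0:ℝ)..t, |h s ω| :=
          intervalIntegral.abs_integral_le_integral_abs ht.1
        have h2 : (∫ s in (0:ℝ)..t, |h s ω|) = ∫ s in Set.Ioc (0:ℝ) t, |h s ω| :=
          intervalIntegral.integral_of_le ht.1
        have h3 : (∫ s in Set.Ioc (0:ℝ) t, |h s ω|)
            = (∫⁻ s in Set.Ioc (0:ℝ) t, ENNReal.ofReal |h s ω|).toReal := by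
          refine integral_eq_lintegral_of_nonneg_ae ?_ ?_
          · exact Filter.Eventually.of_forall fun s => abs_nonneg _
          · exact ((hsec ω).abs).aestronglyMeasurable
        have h4 : (∫⁻ s in Set.Ioc (0:ℝ) t, ENNReal.ofReal |h s ω|) ≤ H ω := by
          rw [hHdef]
          exact lintegral_mono_set (Set.Ioc_subset_Ioc le_rfl ht.2)
        calc |∫ s in (0:ℝ)..t, h s ω| ≤ ∫ s in (0:ℝ)..t, |h s ω| := h1
          _ = (∫⁻ s in Set.Ioc (0:ℝ) t, ENNReal.ofReal |h s ω|).toReal := by rw [h2, h3]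
          _ ≤ (H ω).toReal := ENNReal.toReal_mono hω.ne h4
      calc ENNReal.ofReal |A t ω| ≤ ENNReal.ofReal (H ω).toReal :=
            ENNReal.ofReal_le_ofReal habs
        _ = H ω := ENNReal.ofReal_toReal hω.ne
    have heq : ∫ ω, |A t ω| ∂P = (∫⁻ ω, ENNReal.ofReal |A t ω| ∂P).toReal := by
      refine integral_eq_lintegral_of_nonneg_ae ?_ ?_
      · exact Filter.Eventually.of_forall fun ω => abs_nonneg _
      · exact hInt.abs.aestronglyMeasurable
    rw [heq, hM0def]
    refine ENNReal.toReal_mono hh.2.1.ne ?_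
    exact le_trans (lintegral_mono_ae hptw) (hHint P hP)
  have hM00 : 0 ≤ M0 := ENNReal.toReal_nonneg
  have hΔbound : ∀ P ∈ 𝔓, ∀ k : ℕ, k+1 ≤ 2*n → ∫ ω, |Δ k ω| ∂P ≤ 2*M0 := by
    intro P hP k hk
    have ht1 : (((k:ℝ)+1)*ε) ∈ Set.Icc (0:ℝ) T := by
      have e : ((k:ℝ)+1)*ε = ((k+1:ℕ):ℝ)*ε := by push_cast; ring
      rw [e]; exact hmem (k+1) hk
    have ht0 := hmem k (by omega)
    have i1 := hAint _ ht1 P hP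
    have i0 := hAint _ ht0 P hP
    calc ∫ ω, |Δ k ω| ∂P ≤ ∫ ω, (|A (((k:ℝ)+1)*ε) ω| + |A ((k:ℝ)*ε) ω|) ∂P := by
          refine integral_mono (by exact (i1.sub i0).abs) (i1.abs.add i0.abs) fun ω => ?_
          exact abs_sub _ _
      _ = (∫ ω, |A (((k:ℝ)+1)*ε) ω| ∂P) + ∫ ω, |A ((k:ℝ)*ε) ω| ∂P :=
          integral_add i1.abs i0.abs
      _ ≤ M0 + M0 := add_le_add (hAbound P hP _ ht1) (hAbound P hP _ ht0)
      _ = 2*M0 := by ring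
  have claimA : ∀ (a : ℕ → ℝ) (m : ℕ), m ≤ 2*n →
      sublinearE 𝔓 (fun ω => ∑ k ∈ Finset.range m, a k * Δ k ω)
        = ∑ k ∈ Finset.range m, sublinearE 𝔓 (fun ω => a k * Δ k ω) := by
    intro a m
    induction m with
    | zero => intro _; simpa using sublinearE_zero 𝔓 h𝔓
    | succ m ih =>
      intro hm
      have hm' : m ≤ 2*n := by omega
      set sp : Fin (m+1) → ℝ := fun i => ((i:ℕ):ℝ)*ε with hspdef
      set tp : Fin 2 → ℝ := fun i => ((m:ℝ) + ((i:ℕ):ℝ))*ε with htpdef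
      have hmono_s : Monotone sp := by
        intro i j hij
        have : ((i:ℕ):ℝ) ≤ ((j:ℕ):ℝ) := by exact_mod_cast (Fin.le_def.mp hij)
        exact mul_le_mul_of_nonneg_right this hε.le
      have hmono_t : Monotone tp := by
        intro i j hij
        have : ((i:ℕ):ℝ) ≤ ((j:ℕ):ℝ) := by exact_mod_cast (Fin.le_def.mp hij)
        refine mul_le_mul_of_nonneg_right (by linarith) hε.le
      have hs0 : (0:ℝ) ≤ sp 0 := by simp [hspdef]
      have hslast : sp (Fin.last m) ≤ tp 0 := by
        simp [hspdef, htpdef, Fin.last]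
      have htlast : tp (Fin.last 1) ≤ T := by
        have e : tp (Fin.last 1) = ((m+1:ℕ):ℝ)*ε := by
          simp only [htpdef, Fin.last]
          push_cast
          ring
        rw [e]
        exact (hmem (m+1) hm).2
      have hI := hind m 1 sp tp hmono_s hmono_t hs0 hslast htlast
      set X : Ω → Fin m → ℝ := fun ω i => A (sp i.succ) ω - A (sp i.castSucc) ω with hXdef
      set Y : Ω → Fin 1 → ℝ := fun ω i => A (tp i.succ) ω - A (tp i.castSucc) ω with hYdef
      have hX : ∀ ω (i : Fin m), X ω i = Δ (i:ℕ) ω := by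
        intro ω i
        rw [hXdef, hΔdef]
        simp only [hspdef, Fin.val_succ, Fin.coe_castSucc]
        push_cast
        ring_nf
      have hY : ∀ ω (i : Fin 1), Y ω i = Δ m ω := by
        intro ω i
        rw [hYdef, hΔdef]
        rw [Fin.fin_one_eq_zero i]
        norm_num [htpdef]
      have hXint : ∀ i : Fin m, ∀ P ∈ 𝔓, Integrable (fun ω => X ω i) P := by
        intro i P hP
        rw [show (fun ω => X ω i) = Δ (i:ℕ) from funext fun ω => hX ω i]
        exact hΔint _ (by omega) P hP
      have hYint : ∀ i : Fin 1, ∀ P ∈ 𝔓, Integrable (fun ω => Y ω i) P := by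
        intro i P hP
        rw [show (fun ω => Y ω i) = Δ m from funext fun ω => hY ω i]
        exact hΔint _ (by omega) P hP
      have hXb : ∀ P ∈ 𝔓, ∀ i : Fin m, ∫ ω, |X ω i| ∂P ≤ 2*M0 := by
        intro P hP i
        rw [show (fun ω => |X ω i|) = fun ω => |Δ (i:ℕ) ω| from funext fun ω => by rw [hX]]
        exact hΔbound P hP _ (by omega)
      have hYb : ∀ P ∈ 𝔓, ∀ i : Fin 1, ∫ ω, |Y ω i| ∂P ≤ 2*M0 := by
        intro P hP i
        rw [show (fun ω => |Y ω i|) = fun ω => |Δ m ω| from funext fun ω => by rw [hY]]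
        exact hΔbound P hP _ (by omega)
      have heq := sublinearE_indep_add 𝔓 h𝔓 hprob X Y hI
        (fun i => a (i:ℕ)) (fun _ => a m) hXint hYint (2*M0) (by linarith) hXb hYb
      have cX : (fun ω => ∑ i : Fin m, a (i:ℕ) * X ω i)
          = (fun ω => ∑ k ∈ Finset.range m, a k * Δ k ω) := by
        funext ω
        rw [← Fin.sum_univ_eq_sum_range (fun k => a k * Δ k ω) m]
        exact Finset.sum_congr rfl fun i _ => by rw [hX ω i]
      have cY : (fun ω => ∑ i : Fin 1, a m * Y ω i) = (fun ω => a m * Δ m ω) := by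
        funext ω
        rw [Fin.sum_univ_one, hY]
      calc sublinearE 𝔓 (fun ω => ∑ k ∈ Finset.range (m+1), a k * Δ k ω)
          = sublinearE 𝔓 (fun ω => (∑ i : Fin m, a (i:ℕ) * X ω i)
              + (∑ i : Fin 1, a m * Y ω i)) := by
            refine sublinearE_congr 𝔓 fun ω => ?_
            rw [Finset.sum_range_succ, congrFun cX ω, congrFun cY ω]
        _ = sublinearE 𝔓 (fun ω => ∑ i : Fin m, a (i:ℕ) * X ω i)
              + sublinearE 𝔓 (fun ω => ∑ i : Fin 1, a m * Y ω i) := heq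
        _ = sublinearE 𝔓 (fun ω => ∑ k ∈ Finset.range m, a k * Δ k ω)
              + sublinearE 𝔓 (fun ω => a m * Δ m ω) := by rw [cX, cY]
        _ = ∑ k ∈ Finset.range (m+1), sublinearE 𝔓 (fun ω => a k * Δ k ω) := by
            rw [ih hm', Finset.sum_range_succ]
  have hεIcc : ε ∈ Set.Icc (0:ℝ) T := by
    constructor
    · exact hε.le
    · rw [← hNε]
      have hn1 : (1:ℝ) ≤ (n:ℝ) := by exact_mod_cast hn
      nlinarith
  have hstatgen : ∀ k : ℕ, k+1 ≤ 2*n →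
      IdentDistribSub 𝔓 (fun ω => A (((k:ℝ)+1)*ε) ω - A ((k:ℝ)*ε) ω) (A ε) := by
    intro k hk
    have h0 : (0:ℝ) ≤ (k:ℝ)*ε := (hmem k (by omega)).1
    have hle : (k:ℝ)*ε ≤ ((k:ℝ)+1)*ε := by nlinarith
    have hT' : ((k:ℝ)+1)*ε ≤ T := by
      have e : ((k:ℝ)+1)*ε = ((k+1:ℕ):ℝ)*ε := by push_cast; ring
      rw [e]; exact (hmem (k+1) hk).2
    have hid := hstat ((k:ℝ)*ε) (((k:ℝ)+1)*ε) h0 hle hT'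
    have hsub : ((k:ℝ)+1)*ε - (k:ℝ)*ε = ε := by ring
    rwa [hsub] at hid
  have hΔki : ∀ k : ℕ, k+1 ≤ 2*n → ∀ P ∈ 𝔓,
      Integrable (fun ω => A (((k:ℝ)+1)*ε) ω - A ((k:ℝ)*ε) ω) P := by
    intro k hk P hP
    exact hΔint k hk P hP
  have hstat1 : ∀ k : ℕ, k+1 ≤ 2*n → sublinearE 𝔓 (Δ k) = sublinearE 𝔓 (A ε) := by
    intro k hk
    have hφ : CLLip (fun x : ℝ => x) := by
      refine ⟨1, 0, fun x y => ?_⟩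
      simp only [pow_zero, Real.norm_eq_abs]
      nlinarith [abs_nonneg (x - y)]
    have := hstatgen k hk (fun x => x) hφ (hΔki k hk)
      (fun P hP => hAint ε hεIcc P hP)
    exact this
  have hstat2 : ∀ k : ℕ, k+1 ≤ 2*n →
      sublinearE 𝔓 (fun ω => -Δ k ω) = sublinearE 𝔓 (fun ω => -A ε ω) := by
    intro k hk
    have hφ : CLLip (fun x : ℝ => -x) := by
      refine ⟨1, 0, fun x y => ?_⟩
      simp only [pow_zero, Real.norm_eq_abs]
      rw [show -x - -y = -(x - y) by ring, abs_neg]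
      nlinarith [abs_nonneg (x - y)]
    have := hstatgen k hk (fun x => -x) hφ
      (fun P hP => (hΔki k hk P hP).neg)
      (fun P hP => (hAint ε hεIcc P hP).neg)
    exact this
  set e1 := sublinearE 𝔓 (A ε) with he1
  set e2 := sublinearE 𝔓 (fun ω => -A ε ω) with he2
  have hA0 : ∀ ω, A 0 ω = 0 := by
    intro ω; rw [hA]; exact intervalIntegral.integral_same
  have htel : ∀ ω, A T ω = ∑ k ∈ Finset.range (2*n), Δ k ω := by
    intro ω
    have := Finset.sum_range_sub (fun k : ℕ => A ((k:ℝ)*ε) ω) (2*n)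
    rw [show (fun k : ℕ => Δ k ω) = fun k : ℕ => A (((k+1:ℕ):ℝ)*ε) ω - A ((k:ℝ)*ε) ω from
      funext fun k => by rw [hΔdef]; push_cast; ring_nf]
    rw [this]
    rw [show (((2*n:ℕ)):ℝ)*ε = T by push_cast; rw [← hNε]]
    simp [hA0]
  have hEAT : sublinearE 𝔓 (A T) = (2*(n:ℝ)) * e1 := by
    have c1 : sublinearE 𝔓 (A T)
        = sublinearE 𝔓 (fun ω => ∑ k ∈ Finset.range (2*n), (1:ℝ) * Δ k ω) := by
      refine sublinearE_congr 𝔓 fun ω => ?_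
      rw [htel ω]
      exact Finset.sum_congr rfl fun k _ => (one_mul _).symm
    rw [c1, claimA (fun _ => (1:ℝ)) (2*n) le_rfl]
    have c2 : ∀ k ∈ Finset.range (2*n),
        sublinearE 𝔓 (fun ω => (1:ℝ) * Δ k ω) = e1 := by
      intro k hk
      rw [Finset.mem_range] at hk
      rw [sublinearE_congr 𝔓 fun ω => one_mul (Δ k ω)]
      exact hstat1 k (by omega)
    rw [Finset.sum_congr rfl c2, Finset.sum_const, Finset.card_range, nsmul_eq_mul]
    push_cast
    ring
  have hEnegAT : sublinearE 𝔓 (fun ω => -A T ω) = (2*(n:ℝ)) * e2 := by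
    have c1 : sublinearE 𝔓 (fun ω => -A T ω)
        = sublinearE 𝔓 (fun ω => ∑ k ∈ Finset.range (2*n), (-1:ℝ) * Δ k ω) := by
      refine sublinearE_congr 𝔓 fun ω => ?_
      rw [htel ω, ← Finset.sum_neg_distrib]
      exact Finset.sum_congr rfl fun k _ => by ring
    rw [c1, claimA (fun _ => (-1:ℝ)) (2*n) le_rfl]
    have c2 : ∀ k ∈ Finset.range (2*n),
        sublinearE 𝔓 (fun ω => (-1:ℝ) * Δ k ω) = e2 := by
      intro k hk
      rw [Finset.mem_range] at hk
      rw [sublinearE_congr 𝔓 fun ω => by rw [neg_one_mul]]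
      exact hstat2 k (by omega)
    rw [Finset.sum_congr rfl c2, Finset.sum_const, Finset.card_range, nsmul_eq_mul]
    push_cast
    ring
  set av : ℕ → ℝ := fun k => if k ≤ 1 then 0 else if Even k then -1 else 1 with havdef
  set S : Ω → ℝ := fun ω => ∑ k ∈ Finset.range (2*n), av k * Δ k ω with hSdef
  have hES : sublinearE 𝔓 S = ((n:ℝ)-1) * (e1 + e2) := by
    rw [hSdef, claimA av (2*n) le_rfl]
    have c2 : ∀ k ∈ Finset.range (2*n), sublinearE 𝔓 (fun ω => av k * Δ k ω)
        = (if k ≤ 1 then (0:ℝ) else if Even k then e2 else e1) := by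
      intro k hk
      rw [Finset.mem_range] at hk
      by_cases hk1 : k ≤ 1
      · rw [if_pos hk1]
        have : (fun ω => av k * Δ k ω) = fun _ => (0:ℝ) := by
          funext ω; rw [havdef]; simp [hk1]
        rw [this]
        exact sublinearE_zero 𝔓 h𝔓
      · rw [if_neg hk1]
        by_cases hk2 : Even k
        · rw [if_pos hk2]
          have : (fun ω => av k * Δ k ω) = fun ω => -Δ k ω := by
            funext ω; rw [havdef]; simp [hk1, hk2]
          rw [this]
          exact hstat2 k (by omega)
        · rw [if_neg hk2]
          have : (fun ω => av k * Δ k ω) = fun ω => Δ k ω := by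
            funext ω; rw [havdef]; simp [hk1, hk2]
          rw [this]
          exact hstat1 k (by omega)
    rw [Finset.sum_congr rfl c2]
    rw [show 2*n = 2*(n-1)+2 by omega]
    rw [sum_alt (n-1) (fun _ => e2) (fun _ => e1)]
    rw [Finset.sum_const, Finset.card_range, nsmul_eq_mul]
    have : ((n-1:ℕ):ℝ) = (n:ℝ) - 1 := by
      push_cast [Nat.cast_sub hn]
      ring
    rw [this]
    ring
  have hr : (sublinearE 𝔓 (A T) / T - (-sublinearE 𝔓 (fun ω => -A T ω) / T)) *
      ((n:ℝ)-1) * T / (2*(n:ℝ)) = ((n:ℝ)-1)*(e1+e2) := by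
    rw [hEAT, hEnegAT]
    field_simp
    ring
  have hfloor : Nat.floor (T/ε) = 2*n := by
    have e : T/ε = ((2*n:ℕ):ℝ) := by
      rw [hεdef]; push_cast; field_simp
    rw [e, Nat.floor_natCast]
  set B : ℕ → Set ℝ := fun k => Set.Ioc ((k:ℝ)*ε) (((k:ℝ)+1)*ε) with hBdef
  have hBsub : ∀ k : ℕ, k+1 ≤ 2*n → B k ⊆ Set.Ioc (0:ℝ) T := by
    intro k hk
    rw [hBdef]
    refine Set.Ioc_subset_Ioc ?_ ?_
    · exact (hmem k (by omega)).1
    · have e : ((k:ℝ)+1)*ε = ((k+1:ℕ):ℝ)*ε := by push_cast; ring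
      rw [e]; exact (hmem (k+1) hk).2
  have hmain : ∀ P ∈ 𝔓, ENNReal.ofReal (∫ ω, S ω ∂P) ≤
      M1norm 𝔓 T (fun t ω => h t ω - blockAvg T ε h t ω) := by
    intro P hP
    have key : ∀ ω, H ω < ⊤ → ‖S ω‖ₑ ≤
        ∫⁻ t in Set.Ioc (0:ℝ) T, ENNReal.ofReal |h t ω - blockAvg T ε h t ω| := by
      intro ω hω
      have hblock : ∀ k : ℕ, 1 ≤ k → k < 2*n → ∀ t ∈ B k,
          blockAvg T ε h t ω = ε⁻¹ * ∫ s in (((k:ℝ)-1)*ε)..((k:ℝ)*ε), h s ω := by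
        intro k hk1 hk2 t ht
        unfold blockAvg
        rw [hfloor]
        rw [Finset.sum_eq_single k]
        · rw [Set.indicator_of_mem ht (fun _ => (1:ℝ)), mul_one]
        · intro b hb hbk
          rw [Set.indicator_of_notMem, mul_zero]
          rcases lt_or_gt_of_ne hbk with hlt | hgt
          · intro hmem'
            have h1 : ((b:ℝ)+1) ≤ (k:ℝ) := by exact_mod_cast hlt
            have h2 : t ≤ ((b:ℝ)+1)*ε := hmem'.2
            have h3 : ((k:ℝ))*ε < t := ht.1
            nlinarith
          · intro hmem'
            have h1 : ((k:ℝ)+1) ≤ (b:ℝ) := by exact_mod_cast hgt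
            have h2 : ((b:ℝ))*ε < t := hmem'.1
            have h3 : t ≤ ((k:ℝ)+1)*ε := ht.2
            nlinarith
        · intro hk
          exact absurd (Finset.mem_Ico.mpr ⟨hk1, hk2⟩) hk
      have hbint : ∀ k : ℕ, 1 ≤ k → k < 2*n →
          (∫ t in B k, (h t ω - blockAvg T ε h t ω)) = Δ k ω - Δ (k-1) ω := by
        intro k hk1 hk2
        have hk1R : (1:ℝ) ≤ (k:ℝ) := by exact_mod_cast hk1
        have hksub := hBsub k (by omega)
        have hIoc : IntegrableOn (fun t => h t ω) (B k) volume :=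
          (hIocT ω hω).mono_set hksub
        set c : ℝ := ε⁻¹ * ∫ s in (((k:ℝ)-1)*ε)..((k:ℝ)*ε), h s ω with hcdef
        have hBmeas : MeasurableSet (B k) := measurableSet_Ioc
        have e1 : (∫ t in B k, (h t ω - blockAvg T ε h t ω))
            = ∫ t in B k, (h t ω - c) := by
          refine setIntegral_congr_fun hBmeas fun t ht => ?_
          rw [hblock k hk1 hk2 t ht]
        have hconst : IntegrableOn (fun _ : ℝ => c) (B k) volume := by
          refine integrableOn_const ?_
          rw [hBdef]
          simp only []
          rw [Real.volume_Ioc]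
          exact ENNReal.ofReal_ne_top
        have e2 : (∫ t in B k, (h t ω - c)) = (∫ t in B k, h t ω) - (∫ t in B k, (c:ℝ)) :=
          integral_sub hIoc hconst
        have hkT : ((k:ℝ)+1)*ε ≤ T := by
          have e : ((k:ℝ)+1)*ε = ((k+1:ℕ):ℝ)*ε := by push_cast; ring
          rw [e]; exact (hmem (k+1) (by omega)).2
        have e3 : (∫ t in B k, h t ω) = Δ k ω := by
          rw [hBdef]
          simp only []
          rw [← intervalIntegral.integral_of_le (by nlinarith : (k:ℝ)*ε ≤ ((k:ℝ)+1)*ε)]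
          rw [hΔdef]
          exact (hAdiff ω hω ((k:ℝ)*ε) (((k:ℝ)+1)*ε) (hmem k (by omega)).1
            (by nlinarith) hkT).symm
        have e4 : (∫ t in B k, (c:ℝ)) = Δ (k-1) ω := by
          rw [setIntegral_const, hBdef]
          simp only []
          rw [Real.volume_real_Ioc, show ((k:ℝ)+1)*ε - (k:ℝ)*ε = ε by ring,
            max_eq_left hε.le, smul_eq_mul, hcdef]
          rw [show ε * (ε⁻¹ * ∫ s in (((k:ℝ)-1)*ε)..((k:ℝ)*ε), h s ω)
              = ∫ s in (((k:ℝ)-1)*ε)..((k:ℝ)*ε), h s ω by field_simp]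
          have hd := hAdiff ω hω (((k:ℝ)-1)*ε) ((k:ℝ)*ε) (by nlinarith) (by nlinarith)
            (le_trans (by nlinarith) hkT)
          rw [← hd, hΔdef]
          have ecast : ((k-1:ℕ):ℝ) = (k:ℝ)-1 := by
            push_cast [Nat.cast_sub hk1]
            ring
          simp only [ecast]
          rw [show ((k:ℝ)-1+1)*ε = (k:ℝ)*ε by ring]
        rw [e1, e2, e3, e4]
      have hSeq : S ω = ∑ j ∈ Finset.range (n-1), (Δ (2*j+3) ω - Δ (2*j+2) ω) := by
        rw [hSdef]
        simp only []
        rw [show 2*n = 2*(n-1)+2 by omega]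
        calc ∑ k ∈ Finset.range (2*(n-1)+2), av k * Δ k ω
            = ∑ k ∈ Finset.range (2*(n-1)+2),
                (if k ≤ 1 then (0:ℝ) else if Even k then (fun k => -Δ k ω) k
                  else (fun k => Δ k ω) k) := by
              refine Finset.sum_congr rfl fun k _ => ?_
              rw [havdef]
              dsimp only
              split_ifs <;> ring
          _ = ∑ j ∈ Finset.range (n-1),
                ((fun k => -Δ k ω) (2*j+2) + (fun k => Δ k ω) (2*j+3)) := sum_alt _ _ _
          _ = ∑ j ∈ Finset.range (n-1), (Δ (2*j+3) ω - Δ (2*j+2) ω) := by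
              refine Finset.sum_congr rfl fun j _ => ?_
              dsimp only
              ring
      have hdis : ∀ i j : ℕ, i < j → Disjoint (B (2*i+3)) (B (2*j+3)) := by
        intro i j hij
        rw [hBdef]
        simp only []
        rw [Set.Ioc_disjoint_Ioc]
        refine le_trans (min_le_left _ _) (le_trans ?_ (le_max_right _ _))
        have hnat : ((2*i+3:ℕ):ℝ)+1 ≤ ((2*j+3:ℕ):ℝ) := by
          push_cast
          have : (i:ℝ) + 1 ≤ (j:ℝ) := by exact_mod_cast hij
          linarith
        exact mul_le_mul_of_nonneg_right hnat hε.le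
      rw [Real.enorm_eq_ofReal_abs]
      calc ENNReal.ofReal |S ω|
          ≤ ENNReal.ofReal (∑ j ∈ Finset.range (n-1), |Δ (2*j+3) ω - Δ (2*j+2) ω|) := by
            apply ENNReal.ofReal_le_ofReal
            rw [hSeq]
            exact Finset.abs_sum_le_sum_abs _ _
        _ = ∑ j ∈ Finset.range (n-1), ENNReal.ofReal |Δ (2*j+3) ω - Δ (2*j+2) ω| :=
            ENNReal.ofReal_sum_of_nonneg fun j _ => abs_nonneg _
        _ ≤ ∑ j ∈ Finset.range (n-1),
              ∫⁻ t in B (2*j+3), ENNReal.ofReal |h t ω - blockAvg T ε h t ω| := by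
            refine Finset.sum_le_sum fun j hj => ?_
            rw [Finset.mem_range] at hj
            have hb := hbint (2*j+3) (by omega) (by omega)
            have e5 : 2*j+3-1 = 2*j+2 := by omega
            rw [e5] at hb
            rw [← hb, ← Real.enorm_eq_ofReal_abs]
            refine le_trans (enorm_integral_le_lintegral_enorm _) ?_
            refine le_of_eq (lintegral_congr fun t => ?_)
            rw [Real.enorm_eq_ofReal_abs]
        _ = ∫⁻ t in ⋃ j ∈ Finset.range (n-1), B (2*j+3),
              ENNReal.ofReal |h t ω - blockAvg T ε h t ω| := by
            refine (lintegral_biUnion_finset ?_ (fun b _ => measurableSet_Ioc) _).symm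
            intro i hi j hj hij
            rcases lt_or_gt_of_ne hij with hlt | hgt
            · exact hdis i j hlt
            · exact (hdis j i hgt).symm
        _ ≤ ∫⁻ t in Set.Ioc (0:ℝ) T, ENNReal.ofReal |h t ω - blockAvg T ε h t ω| := by
            apply lintegral_mono_set
            refine Set.iUnion₂_subset fun j hj => ?_
            rw [Finset.mem_range] at hj
            exact hBsub (2*j+3) (by omega)
    have hae : ∀ᵐ ω ∂(P : Measure Ω), ‖S ω‖ₑ ≤
        ∫⁻ t in Set.Ioc (0:ℝ) T, ENNReal.ofReal |h t ω - blockAvg T ε h t ω| :=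
      (hHfin P hP).mono fun ω hω => key ω hω
    calc ENNReal.ofReal (∫ ω, S ω ∂(P : Measure Ω))
        ≤ ‖∫ ω, S ω ∂(P : Measure Ω)‖ₑ := by
          rw [Real.enorm_eq_ofReal_abs]
          exact ENNReal.ofReal_le_ofReal (le_abs_self _)
      _ ≤ ∫⁻ ω, ‖S ω‖ₑ ∂P := enorm_integral_le_lintegral_enorm _
      _ ≤ ∫⁻ ω, (∫⁻ t in Set.Ioc (0:ℝ) T,
            ENNReal.ofReal |h t ω - blockAvg T ε h t ω|) ∂P := lintegral_mono_ae hae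
      _ ≤ M1norm 𝔓 T (fun t ω => h t ω - blockAvg T ε h t ω) :=
          le_iSup (fun Q : 𝔓 => ∫⁻ ω, (∫⁻ t in Set.Ioc (0:ℝ) T,
            ENNReal.ofReal |h t ω - blockAvg T ε h t ω|) ∂(Q : Measure Ω)) ⟨P, hP⟩
  have hSint : ∀ P ∈ 𝔓, Integrable S P := by
    intro P hP
    exact integrable_finset_sum _ fun k hk =>
      ((hΔint k (by simp at hk; omega) P hP).const_mul _)
  have hSbdd : BddAbove (Set.range fun P : 𝔓 => ∫ ω, S ω ∂P) := by
    refine ⟨(2*(n:ℕ):ℝ) * (2*M0), ?_⟩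
    rintro x ⟨P, rfl⟩
    have hint2 : Integrable (fun ω => ∑ k ∈ Finset.range (2*n), |av k| * |Δ k ω|) P :=
      integrable_finset_sum _ fun k hk =>
        ((hΔint k (by simp at hk; omega) P P.2).abs.const_mul _)
    calc ∫ ω, S ω ∂(P : Measure Ω)
        ≤ ∫ ω, (∑ k ∈ Finset.range (2*n), |av k| * |Δ k ω|) ∂P := by
          refine integral_mono (hSint P P.2) hint2 fun ω => ?_
          rw [hSdef]
          calc (∑ k ∈ Finset.range (2*n), av k * Δ k ω)
              ≤ |∑ k ∈ Finset.range (2*n), av k * Δ k ω| := le_abs_self _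
            _ ≤ ∑ k ∈ Finset.range (2*n), |av k * Δ k ω| := Finset.abs_sum_le_sum_abs _ _
            _ = ∑ k ∈ Finset.range (2*n), |av k| * |Δ k ω| :=
                Finset.sum_congr rfl fun k _ => abs_mul _ _
      _ = ∑ k ∈ Finset.range (2*n), |av k| * ∫ ω, |Δ k ω| ∂P := by
          rw [integral_finset_sum _ fun k hk =>
            ((hΔint k (by simp at hk; omega) P P.2).abs.const_mul _)]
          exact Finset.sum_congr rfl fun k _ => integral_const_mul _ _
      _ ≤ ∑ _k ∈ Finset.range (2*n), (1:ℝ) * (2*M0) := by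
          refine Finset.sum_le_sum fun k hk => ?_
          refine mul_le_mul ?_ (hΔbound P P.2 k (by simp at hk; omega)) ?_ zero_le_one
          · rw [havdef]; dsimp only; split_ifs <;> norm_num
          · exact integral_nonneg fun ω => abs_nonneg _
      _ ≤ (2*(n:ℕ):ℝ) * (2*M0) := by
          rw [Finset.sum_const, Finset.card_range, nsmul_eq_mul]
          push_cast
          nlinarith
  rw [hr, ← hES]
  refine ENNReal.le_of_forall_pos_le_add fun δ hδ _ => ?_
  have hδR : (0:ℝ) < δ := hδ
  have hlt : sublinearE 𝔓 S - δ < ⨆ P : 𝔓, ∫ ω, S ω ∂(P : Measure Ω) := by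
    rw [show (⨆ P : 𝔓, ∫ ω, S ω ∂(P : Measure Ω)) = sublinearE 𝔓 S from rfl]
    linarith
  obtain ⟨P, hPlt⟩ := exists_lt_of_lt_ciSup hlt
  calc ENNReal.ofReal (sublinearE 𝔓 S)
      ≤ ENNReal.ofReal ((∫ ω, S ω ∂(P : Measure Ω)) + δ) := by
        apply ENNReal.ofReal_le_ofReal; linarith
    _ ≤ ENNReal.ofReal (∫ ω, S ω ∂(P : Measure Ω)) + ENNReal.ofReal δ :=
        ENNReal.ofReal_add_le
    _ ≤ M1norm 𝔓 T (fun t ω => h t ω - blockAvg T ε h t ω) + δ := by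
        refine add_le_add (hmain P P.2) ?_
        simp [ENNReal.ofReal_coe_nnreal]
end
end

section
/- Let h ∈ M¹(𝒫) and A_t := ∫₀ᵗ h_s ds for t ∈ [0,T]. If the process (A_t)_{t∈[0,T]} has independent increments under Ê, then A_t is symmetric for every t ∈ [0,T], i.e. Ê(A_t) + Ê(−A_t) = 0. -/
open MeasureTheory Filter
open scoped ENNReal

noncomputable section

variable {Ω : Type*} [MeasurableSpace Ω]

section Aux
variable {Ω : Type*} [MeasurableSpace Ω] {𝔓 : Set (Measure Ω)}

lemma bddAbove_of {g : Ω → ℝ} {M : ℝ}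
    (hM : ∀ P ∈ 𝔓, ∫ ω, g ω ∂P ≤ M) :
    BddAbove (Set.range fun P : 𝔓 => ∫ ω, g ω ∂(P : Measure Ω)) := by
  refine ⟨M, ?_⟩
  rintro x ⟨P, rfl⟩
  exact hM P P.2

lemma subE_le (hne : 𝔓.Nonempty) {g : Ω → ℝ} {M : ℝ}
    (hM : ∀ P ∈ 𝔓, ∫ ω, g ω ∂P ≤ M) : sublinearE 𝔓 g ≤ M := by
  have : Nonempty 𝔓 := hne.to_subtype
  exact ciSup_le fun P => hM P P.2

lemma le_subE {g : Ω → ℝ} {M : ℝ} (hM : ∀ P ∈ 𝔓, ∫ ω, g ω ∂P ≤ M)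
    {P : Measure Ω} (hP : P ∈ 𝔓) : ∫ ω, g ω ∂P ≤ sublinearE 𝔓 g :=
  le_ciSup (bddAbove_of hM) (⟨P, hP⟩ : 𝔓)

lemma subE_const_add (hne : 𝔓.Nonempty) (hprob : ∀ P ∈ 𝔓, IsProbabilityMeasure P)
    (c : ℝ) {g : Ω → ℝ} {M : ℝ}
    (hint : ∀ P ∈ 𝔓, Integrable g P) (hM : ∀ P ∈ 𝔓, ∫ ω, g ω ∂P ≤ M) :
    sublinearE 𝔓 (fun ω => c + g ω) = c + sublinearE 𝔓 g := by
  have hne' : Nonempty 𝔓 := hne.to_subtype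
  have h1 : ∀ P : 𝔓, ∫ ω, (c + g ω) ∂(P : Measure Ω) = c + ∫ ω, g ω ∂(P : Measure Ω) := by
    intro P
    have : IsProbabilityMeasure (P : Measure Ω) := hprob P P.2
    rw [integral_add (integrable_const c) (hint P P.2), integral_const]
    simp
  have e1 : sublinearE 𝔓 (fun ω => c + g ω) = ⨆ P : 𝔓, (c + ∫ ω, g ω ∂(P : Measure Ω)) :=
    iSup_congr h1
  have bdd2 : BddAbove (Set.range fun P : 𝔓 => c + ∫ ω, g ω ∂(P : Measure Ω)) := by
    refine ⟨c + M, ?_⟩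
    rintro x ⟨P, rfl⟩
    exact add_le_add_right (hM P P.2) c
  rw [e1]
  refine le_antisymm (ciSup_le fun P => add_le_add_right (le_ciSup (bddAbove_of hM) P) c) ?_
  have h2 : sublinearE 𝔓 g ≤ (⨆ P : 𝔓, (c + ∫ ω, g ω ∂(P : Measure Ω))) - c :=
    ciSup_le fun P => le_sub_iff_add_le'.2 (le_ciSup bdd2 P)
  have h3 : sublinearE 𝔓 g = ⨆ P : 𝔓, ∫ ω, g ω ∂(P : Measure Ω) := rfl
  linarith

lemma sum_range_two_mul (n : ℕ) (f : ℕ → ℝ) :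
    ∑ k ∈ Finset.range (2*n), f k = ∑ j ∈ Finset.range n, (f (2*j) + f (2*j+1)) := by
  induction n with
  | zero => simp
  | succ n IH =>
    have : 2*(n+1) = (2*n+1)+1 := by ring
    rw [this, Finset.sum_range_succ, Finset.sum_range_succ, IH, Finset.sum_range_succ]
    ring

lemma addEq {T : ℝ} {A : ℝ → Ω → ℝ}
    (hne : 𝔓.Nonempty) (hprob : ∀ P ∈ 𝔓, IsProbabilityMeasure P)
    (hAint : ∀ t ∈ Set.Icc (0:ℝ) T, ∀ P ∈ 𝔓, Integrable (A t) P)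
    (hind : HasIndepIncrements 𝔓 T A)
    {C₀ : ℝ} (hC₀ : ∀ x ∈ Set.Icc (0:ℝ) T, ∀ P ∈ 𝔓, |∫ ω, A x ω ∂P| ≤ C₀)
    (w : ℕ → ℝ) (hw : Monotone w) (hw0 : 0 ≤ w 0) :
    ∀ (K : ℕ), w K ≤ T → ∀ (σ : ℕ → ℝ),
      sublinearE 𝔓 (fun ω => ∑ k ∈ Finset.range K, σ k * (A (w (k+1)) ω - A (w k) ω)) =
      ∑ k ∈ Finset.range K, sublinearE 𝔓 (fun ω => σ k * (A (w (k+1)) ω - A (w k) ω)) := by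
  intro K
  induction K with
  | zero =>
    intro _ σ
    have : Nonempty 𝔓 := hne.to_subtype
    simp [sublinearE]
  | succ K IH =>
    intro hKT σ
    have hmem : ∀ k, k ≤ K + 1 → w k ∈ Set.Icc (0:ℝ) T := fun k hk =>
      ⟨hw0.trans (hw (Nat.zero_le k)), (hw hk).trans hKT⟩
    have hAi : ∀ k, k ≤ K + 1 → ∀ P ∈ 𝔓, Integrable (A (w k)) P := fun k hk P hP =>
      hAint _ (hmem k hk) P hP
    have hΔint : ∀ k, k ≤ K → ∀ P ∈ 𝔓,
        Integrable (fun ω => σ k * (A (w (k+1)) ω - A (w k) ω)) P := fun k hk P hP =>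
      (((hAi (k+1) (by omega) P hP).sub (hAi k (by omega) P hP)).const_mul (σ k))
    have hΔbnd : ∀ k, k ≤ K → ∀ P ∈ 𝔓,
        ∫ ω, σ k * (A (w (k+1)) ω - A (w k) ω) ∂P ≤ |σ k| * (2*C₀) := by
      intro k hk P hP
      rw [integral_const_mul, integral_sub (hAi (k+1) (by omega) P hP) (hAi k (by omega) P hP)]
      calc σ k * (∫ ω, A (w (k+1)) ω ∂P - ∫ ω, A (w k) ω ∂P)
          ≤ |σ k * (∫ ω, A (w (k+1)) ω ∂P - ∫ ω, A (w k) ω ∂P)| := le_abs_self _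
        _ = |σ k| * |∫ ω, A (w (k+1)) ω ∂P - ∫ ω, A (w k) ω ∂P| := abs_mul _ _
        _ ≤ |σ k| * (2*C₀) := by
            refine mul_le_mul_of_nonneg_left ?_ (abs_nonneg _)
            calc |∫ ω, A (w (k+1)) ω ∂P - ∫ ω, A (w k) ω ∂P|
                ≤ |∫ ω, A (w (k+1)) ω ∂P| + |∫ ω, A (w k) ω ∂P| := abs_sub _ _
              _ ≤ C₀ + C₀ := add_le_add (hC₀ _ (hmem _ (by omega)) P hP)
                  (hC₀ _ (hmem _ (by omega)) P hP)
              _ = 2*C₀ := by ring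
    -- notation
    set g : Ω → ℝ := fun ω => ∑ k ∈ Finset.range K, σ k * (A (w (k+1)) ω - A (w k) ω) with hg
    set q : Ω → ℝ := fun ω => σ K * (A (w (K+1)) ω - A (w K) ω) with hq
    have gint : ∀ P ∈ 𝔓, Integrable g P := fun P hP =>
      integrable_finset_sum _ (fun k hk => hΔint k (by
        simp only [Finset.mem_range] at hk; omega) P hP)
    have qint : ∀ P ∈ 𝔓, Integrable q P := fun P hP => hΔint K le_rfl P hP
    have gbnd : ∀ P ∈ 𝔓, ∫ ω, g ω ∂P ≤ ∑ k ∈ Finset.range K, |σ k| * (2*C₀) := by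
      intro P hP
      rw [hg, integral_finset_sum _ (fun k hk => hΔint k (by
        simp only [Finset.mem_range] at hk; omega) P hP)]
      exact Finset.sum_le_sum fun k hk => hΔbnd k (by
        simp only [Finset.mem_range] at hk; omega) P hP
    have qbnd : ∀ P ∈ 𝔓, ∫ ω, q ω ∂P ≤ |σ K| * (2*C₀) := fun P hP => hΔbnd K le_rfl P hP
    -- independence setup
    set s : Fin (K+1) → ℝ := fun i => w i with hs
    set tv : Fin 2 → ℝ := fun i => w (K + i) with htv
    set φ : (Fin K → ℝ) × (Fin 1 → ℝ) → ℝ :=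
      fun p => (∑ i : Fin K, σ i * p.1 i) + σ K * p.2 0 with hφdef
    have hφ : CLLip φ := by
      refine ⟨(∑ i ∈ Finset.range K, |σ i|) + |σ K|, 0, fun x y => ?_⟩
      have hC : (0:ℝ) ≤ (∑ i ∈ Finset.range K, |σ i|) + |σ K| :=
        add_nonneg (Finset.sum_nonneg fun _ _ => abs_nonneg _) (abs_nonneg _)
      have e1 : φ x - φ y =
          (∑ i : Fin K, σ i * (x.1 i - y.1 i)) + σ K * (x.2 0 - y.2 0) := by
        simp only [hφdef, mul_sub, Finset.sum_sub_distrib]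
        ring
      have hb : |φ x - φ y| ≤ ((∑ i ∈ Finset.range K, |σ i|) + |σ K|) * ‖x - y‖ := by
        rw [e1]
        calc |(∑ i : Fin K, σ i * (x.1 i - y.1 i)) + σ K * (x.2 0 - y.2 0)|
            ≤ |∑ i : Fin K, σ i * (x.1 i - y.1 i)| + |σ K * (x.2 0 - y.2 0)| := abs_add_le _ _
          _ ≤ (∑ i : Fin K, |σ i * (x.1 i - y.1 i)|) + |σ K * (x.2 0 - y.2 0)| := by
              gcongr
              exact Finset.abs_sum_le_sum_abs _ _
          _ ≤ (∑ i : Fin K, |σ i| * ‖x - y‖) + |σ K| * ‖x - y‖ := by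
              gcongr with i hi
              · rw [abs_mul]
                refine mul_le_mul_of_nonneg_left ?_ (abs_nonneg _)
                have h1 : |x.1 i - y.1 i| = ‖(x - y).1 i‖ := by
                  simp [Real.norm_eq_abs]
                rw [h1]
                exact (norm_le_pi_norm ((x-y).1) i).trans (norm_fst_le (x-y))
              · rw [abs_mul]
                refine mul_le_mul_of_nonneg_left ?_ (abs_nonneg _)
                have h1 : |x.2 0 - y.2 0| = ‖(x - y).2 0‖ := by
                  simp [Real.norm_eq_abs]
                rw [h1]
                exact (norm_le_pi_norm ((x-y).2) 0).trans (norm_snd_le (x-y))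
          _ = ((∑ i : Fin K, |σ i|) + |σ K|) * ‖x - y‖ := by
              rw [← Finset.sum_mul]; ring
          _ = ((∑ i ∈ Finset.range K, |σ i|) + |σ K|) * ‖x - y‖ := by
              rw [Fin.sum_univ_eq_sum_range (fun i => |σ i|) K]
      calc |φ x - φ y| ≤ ((∑ i ∈ Finset.range K, |σ i|) + |σ K|) * ‖x - y‖ := hb
        _ ≤ ((∑ i ∈ Finset.range K, |σ i|) + |σ K|) * (1 + ‖x‖ ^ 0 + ‖y‖ ^ 0) * ‖x - y‖ := by
            simp only [pow_zero]
            nlinarith [norm_nonneg (x - y), hC]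
    -- independence instance
    have hsmono : Monotone s := fun a b hab => hw (Fin.le_def.1 hab)
    have htvmono : Monotone tv := fun a b hab => hw (Nat.add_le_add_left (Fin.le_def.1 hab) K)
    have h0s : 0 ≤ s 0 := by simpa [hs] using hw0
    have hslast : s (Fin.last K) ≤ tv 0 := by simp [hs, htv]
    have htvlast : tv (Fin.last 1) ≤ T := by simpa [htv] using hKT
    have main := hind K 1 s tv hsmono htvmono h0s hslast htvlast φ hφ
    have keyX : ∀ ω, (∑ i : Fin K, σ i * (A (s i.succ) ω - A (s i.castSucc) ω)) = g ω := by
      intro ω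
      have e : g ω = ∑ k ∈ Finset.range K, σ k * (A (w (k+1)) ω - A (w k) ω) := rfl
      rw [e, ← Fin.sum_univ_eq_sum_range (fun k => σ k * (A (w (k+1)) ω - A (w k) ω)) K]
      exact Finset.sum_congr rfl fun i _ => by simp [hs, Fin.val_succ, Fin.coe_castSucc]
    have keyY : ∀ ω, σ K * (A (tv (0:Fin 1).succ) ω - A (tv (0:Fin 1).castSucc) ω) = q ω := by
      intro ω; simp [htv, hq]
    have key1 : ∀ ω ω', φ (fun i => A (s i.succ) ω - A (s i.castSucc) ω,
        fun i => A (tv i.succ) ω' - A (tv i.castSucc) ω') = g ω + q ω' := by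
      intro ω ω'
      simp only [hφdef]
      rw [keyX ω, keyY ω']
    have keyInner : ∀ ω, sublinearE 𝔓 (fun ω' =>
        φ (fun i => A (s i.succ) ω - A (s i.castSucc) ω,
           fun i => A (tv i.succ) ω' - A (tv i.castSucc) ω')) = g ω + sublinearE 𝔓 q := by
      intro ω
      have e3 : (fun ω' => φ (fun i => A (s i.succ) ω - A (s i.castSucc) ω,
          fun i => A (tv i.succ) ω' - A (tv i.castSucc) ω')) = fun ω' => g ω + q ω' :=
        funext fun ω' => key1 ω ω'
      rw [e3]
      exact subE_const_add hne hprob (g ω) qint qbnd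
    have h1 : ∀ P ∈ 𝔓, Integrable (fun ω =>
        φ (fun i => A (s i.succ) ω - A (s i.castSucc) ω,
           fun i => A (tv i.succ) ω - A (tv i.castSucc) ω)) P := fun P hP =>
      ((gint P hP).add (qint P hP)).congr (Eventually.of_forall fun ω => (key1 ω ω).symm)
    have h2 : ∀ x : Fin K → ℝ, ∀ P ∈ 𝔓, Integrable (fun ω =>
        φ (x, fun i => A (tv i.succ) ω - A (tv i.castSucc) ω)) P := by
      intro x P hP
      have _i : IsProbabilityMeasure P := hprob P hP
      have : ∀ ω, φ (x, fun i => A (tv i.succ) ω - A (tv i.castSucc) ω)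
          = (∑ i : Fin K, σ i * x i) + q ω := by
        intro ω
        simp only [hφdef]
        rw [keyY ω]
      exact ((integrable_const _).add (qint P hP)).congr (Eventually.of_forall fun ω => (this ω).symm)
    have h3 : ∀ P ∈ 𝔓, Integrable (fun ω => sublinearE 𝔓 (fun ω' =>
        φ (fun i => A (s i.succ) ω - A (s i.castSucc) ω,
           fun i => A (tv i.succ) ω' - A (tv i.castSucc) ω'))) P := by
      intro P hP
      have _i : IsProbabilityMeasure P := hprob P hP
      exact ((gint P hP).add (integrable_const _)).congr
        (Eventually.of_forall fun ω => (keyInner ω).symm)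
    have main2 := main h1 h2 h3
    have stepEq : sublinearE 𝔓 (fun ω => g ω + q ω) = sublinearE 𝔓 g + sublinearE 𝔓 q := by
      calc sublinearE 𝔓 (fun ω => g ω + q ω)
          = sublinearE 𝔓 (fun ω => φ (fun i => A (s i.succ) ω - A (s i.castSucc) ω,
              fun i => A (tv i.succ) ω - A (tv i.castSucc) ω)) :=
            congrArg _ (funext fun ω => (key1 ω ω).symm)
        _ = sublinearE 𝔓 (fun ω => sublinearE 𝔓 (fun ω' =>
              φ (fun i => A (s i.succ) ω - A (s i.castSucc) ω,
                 fun i => A (tv i.succ) ω' - A (tv i.castSucc) ω'))) := main2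
        _ = sublinearE 𝔓 (fun ω => sublinearE 𝔓 q + g ω) :=
            congrArg _ (funext fun ω => by rw [keyInner ω]; ring)
        _ = sublinearE 𝔓 q + sublinearE 𝔓 g := subE_const_add hne hprob _ gint gbnd
        _ = sublinearE 𝔓 g + sublinearE 𝔓 q := add_comm _ _
    have hgoal1 : (fun ω => ∑ k ∈ Finset.range (K+1), σ k * (A (w (k+1)) ω - A (w k) ω))
        = fun ω => g ω + q ω := by
      funext ω
      simp only [hg, hq]
      rw [Finset.sum_range_succ]
    rw [congrArg (sublinearE 𝔓) hgoal1, Finset.sum_range_succ, stepEq,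
      IH ((hw (Nat.le_succ K)).trans hKT) σ, hq]
end Aux

lemma abs_intervalIntegral_le {T : ℝ} (hT : 0 < T) (f : ℝ → ℝ) (hf : Measurable f)
    (hfin : (∫⁻ s in Set.Ioc (0:ℝ) T, ENNReal.ofReal |f s|) ≠ ⊤)
    {x : ℝ} (hx : x ∈ Set.Icc (0:ℝ) T) :
    |∫ s in (0:ℝ)..x, f s| ≤ (∫⁻ s in Set.Ioc (0:ℝ) T, ENNReal.ofReal |f s|).toReal := by
  obtain ⟨hx0, hxT⟩ := hx
  have hIT : IntegrableOn f (Set.Ioc 0 T) volume := by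
    refine ⟨hf.aestronglyMeasurable, ?_⟩
    rw [hasFiniteIntegral_iff_norm]
    simpa [Real.norm_eq_abs] using hfin.lt_top
  have hII : ∀ a b : ℝ, 0 ≤ a → a ≤ b → b ≤ T → IntervalIntegrable f volume a b :=
    fun a b h0 hab hbT => (intervalIntegrable_iff_integrableOn_Ioc_of_le hab).2
      (hIT.mono_set (Set.Ioc_subset_Ioc h0 hbT))
  calc |∫ s in (0:ℝ)..x, f s| ≤ ∫ s in (0:ℝ)..x, |f s| :=
        intervalIntegral.abs_integral_le_integral_abs hx0
    _ ≤ ∫ s in (0:ℝ)..T, |f s| := by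
        refine intervalIntegral.integral_mono_interval le_rfl hx0 hxT
          (Filter.Eventually.of_forall fun s => abs_nonneg _) ((hII 0 T le_rfl hT.le le_rfl).abs)
    _ = (∫⁻ s in Set.Ioc (0:ℝ) T, ENNReal.ofReal |f s|).toReal := by
        rw [intervalIntegral.integral_of_le hT.le,
          MeasureTheory.integral_eq_lintegral_of_nonneg_ae
            (Filter.Eventually.of_forall fun s => abs_nonneg _)
            (hf.abs.aestronglyMeasurable)]
/-- if `A_t = ∫₀ᵗ h_s ds` with `h ∈ M¹(𝔓)` has independent increments under
`Ê`, then `A_t` is symmetric for every `t ∈ [0,T]`, i.e. `Ê(A_t) + Ê(−A_t) = 0`. -/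
theorem stmt2 (𝔓 : Set (Measure Ω)) (h𝔓 : 𝔓.Nonempty)
    (hprob : ∀ P ∈ 𝔓, IsProbabilityMeasure P)
    (T : ℝ) (hT : 0 < T)
    (h : ℝ → Ω → ℝ) (hh : MemM1 𝔓 T h)
    (A : ℝ → Ω → ℝ) (hA : ∀ t ω, A t ω = ∫ s in (0:ℝ)..t, h s ω)
    (hAint : ∀ t ∈ Set.Icc (0:ℝ) T, ∀ P ∈ 𝔓, Integrable (A t) P)
    (hind : HasIndepIncrements 𝔓 T A) :
    ∀ t ∈ Set.Icc (0:ℝ) T,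
      sublinearE 𝔓 (A t) + sublinearE 𝔓 (fun ω => -A t ω) = 0 := by
  obtain ⟨hmeas, hfin, happrox⟩ := hh
  have hne' : Nonempty 𝔓 := h𝔓.to_subtype
  have hsec : ∀ ω, Measurable fun s => h s ω := fun ω =>
    hmeas.comp (measurable_id.prodMk measurable_const)
  set G₀ : Ω → ℝ≥0∞ := fun ω => ∫⁻ s in Set.Ioc (0:ℝ) T, ENNReal.ofReal |h s ω| with hG₀def
  have hG₀meas : Measurable G₀ := by
    have hm : Measurable fun p : ℝ × Ω => ENNReal.ofReal |Function.uncurry h p| :=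
      hmeas.abs.ennreal_ofReal
    exact Measurable.lintegral_prod_left hm
  have hG₀le : ∀ P ∈ 𝔓, ∫⁻ ω, G₀ ω ∂P ≤ M1norm 𝔓 T h := by
    intro P hP
    unfold M1norm
    exact le_iSup (fun Q : 𝔓 => ∫⁻ ω, G₀ ω ∂(Q : Measure Ω)) ⟨P, hP⟩
  set C₀ := (M1norm 𝔓 T h).toReal with hC₀def
  have hC₀ : ∀ x ∈ Set.Icc (0:ℝ) T, ∀ P ∈ 𝔓, |∫ ω, A x ω ∂P| ≤ C₀ := by
    intro x hx P hP
    have _i : IsProbabilityMeasure P := hprob P hP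
    have hfinP : ∫⁻ ω, G₀ ω ∂P ≠ ⊤ := ((hG₀le P hP).trans_lt hfin).ne
    have haefin : ∀ᵐ ω ∂P, G₀ ω < ⊤ := ae_lt_top hG₀meas hfinP
    have hGint : Integrable (fun ω => (G₀ ω).toReal) P :=
      integrable_toReal_of_lintegral_ne_top hG₀meas.aemeasurable hfinP
    have h1 : |∫ ω, A x ω ∂P| ≤ ∫ ω, |A x ω| ∂P := by
      simpa [Real.norm_eq_abs] using norm_integral_le_integral_norm (μ := P) (A x)
    have h2 : ∫ ω, |A x ω| ∂P ≤ ∫ ω, (G₀ ω).toReal ∂P := by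
      refine integral_mono_ae (hAint x hx P hP).abs hGint ?_
      filter_upwards [haefin] with ω hω
      rw [hA x ω]
      exact abs_intervalIntegral_le hT _ (hsec ω) hω.ne hx
    have h3 : ∫ ω, (G₀ ω).toReal ∂P = (∫⁻ ω, G₀ ω ∂P).toReal :=
      integral_toReal hG₀meas.aemeasurable haefin
    have h4 : (∫⁻ ω, G₀ ω ∂P).toReal ≤ C₀ := ENNReal.toReal_mono hfin.ne (hG₀le P hP)
    linarith
  intro t ht
  obtain ⟨ht0, htT⟩ := ht
  have hAbnd : ∀ P ∈ 𝔓, ∫ ω, A t ω ∂P ≤ C₀ := fun P hP =>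
    (abs_le.1 (hC₀ t ⟨ht0, htT⟩ P hP)).2
  have hAnbnd : ∀ P ∈ 𝔓, ∫ ω, -A t ω ∂P ≤ C₀ := by
    intro P hP
    have e : ∫ ω, -A t ω ∂P = -∫ ω, A t ω ∂P := integral_neg _
    rw [e]
    linarith [(abs_le.1 (hC₀ t ⟨ht0, htT⟩ P hP)).1]
  have hlow : 0 ≤ sublinearE 𝔓 (A t) + sublinearE 𝔓 (fun ω => -A t ω) := by
    obtain ⟨P, hP⟩ := h𝔓
    have e1 := le_subE hAbnd hP
    have e2 := le_subE hAnbnd hP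
    have e3 : ∫ ω, -A t ω ∂P = -∫ ω, A t ω ∂P := integral_neg _
    linarith
  have hupper : ∀ ε : ℝ, 0 < ε →
      sublinearE 𝔓 (A t) + sublinearE 𝔓 (fun ω => -A t ω) ≤ 2*ε := by
    intro ε hε
    obtain ⟨ζ, hζstep, hζerr⟩ := happrox (ENNReal.ofReal ε) (by simpa using hε)
    obtain ⟨N, τ, ξ, hτ0, hτT, hτmono, hξmeas, hξbnd, hζrepr⟩ := hζstep
    set τ' : ℕ → ℝ := fun j => τ ⟨min j N, by omega⟩ with hτ'def
    set v : ℕ → ℝ := fun j => min (τ' j) t with hvdef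
    set w : ℕ → ℝ := fun k => (v (k/2) + v ((k+1)/2))/2 with hwdef
    have hτ'eq : ∀ m : ℕ, m ≤ N → ∀ (hm : m < N + 1), τ' m = τ ⟨m, hm⟩ := by
      intro m hm hm'
      simp only [hτ'def]
      congr 1
      exact Fin.ext (by simpa using Nat.min_eq_left hm)
    have hτ'mono : Monotone τ' := by
      intro a b hab
      exact hτmono.monotone (by simp only [Fin.mk_le_mk]; omega)
    have hvmono : Monotone v := fun a b hab => min_le_min (hτ'mono hab) le_rfl
    have hwmono : Monotone w := by
      intro a b hab
      have h1 := hvmono (Nat.div_le_div_right (c := 2) hab)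
      have h2 := hvmono (Nat.div_le_div_right (c := 2) (Nat.add_le_add_right hab 1))
      simp only [hwdef]
      linarith
    have hv0 : v 0 = 0 := by
      have e : τ' 0 = 0 := by rw [hτ'eq 0 (Nat.zero_le N) (by omega)]; exact hτ0
      simp [hvdef, e, ht0]
    have hvN : ∀ j, N ≤ j → v j = t := by
      intro j hj
      have e : τ' j = T := by
        have : τ' j = τ ⟨N, by omega⟩ := by simp only [hτ'def]; congr 1; exact Fin.ext (by simp; omega)
        rw [this]
        have : (⟨N, by omega⟩ : Fin (N+1)) = Fin.last N := rfl
        rw [this, hτT]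
      simp [hvdef, e, htT]
    have hw0 : w 0 = 0 := by simp [hwdef, hv0]
    have hw_even : ∀ j, w (2*j) = v j := by
      intro j
      simp only [hwdef]
      rw [(by omega : (2*j)/2 = j), (by omega : (2*j+1)/2 = j)]
      ring
    have hw_odd : ∀ j, w (2*j+1) = (v j + v (j+1))/2 := by
      intro j
      simp only [hwdef]
      rw [(by omega : (2*j+1)/2 = j), (by omega : (2*j+1+1)/2 = j+1)]
    have hw2N : w (2*N) = t := by rw [hw_even N, hvN N le_rfl]
    have hvt : ∀ j, v j ≤ t := fun j => min_le_right _ _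
    have hv_nonneg : ∀ j, 0 ≤ v j := fun j => hv0 ▸ hvmono (Nat.zero_le j)
    have hwT : ∀ k, w k ≤ T := by
      intro k
      have := hvt (k/2); have := hvt ((k+1)/2)
      simp only [hwdef]
      linarith
    have hwIcc : ∀ k, w k ∈ Set.Icc (0:ℝ) T := by
      intro k
      refine ⟨?_, hwT k⟩
      have := hv_nonneg (k/2); have := hv_nonneg ((k+1)/2)
      simp only [hwdef]; linarith
    -- ζ is constant on each small interval
    have hζconst : ∀ k, k < 2*N → ∀ (hj : k/2 < N) ω, ∀ s ∈ Set.Ioc (w k) (w (k+1)),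
        ζ s ω = ξ ⟨k/2, hj⟩ ω := by
      intro k hk hj ω s hs
      have hsub1 : Set.Ioc (w k) (w (k+1)) ⊆ Set.Ioc (v (k/2)) (v (k/2+1)) := by
        apply Set.Ioc_subset_Ioc
        · have h1 : v (k/2) ≤ v ((k+1)/2) := hvmono (by omega)
          simp only [hwdef]; linarith
        · have h1 : v ((k+1)/2) ≤ v (k/2+1) := hvmono (by omega)
          have h2 : v ((k+1+1)/2) ≤ v (k/2+1) := hvmono (by omega)
          simp only [hwdef]; linarith
      have hs1 := hsub1 hs
      have hs2 : s ∈ Set.Ioc (τ' (k/2)) (τ' (k/2+1)) := by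
        constructor
        · rcases le_or_gt (τ' (k/2)) t with hle | hlt
          · have e : v (k/2) = τ' (k/2) := min_eq_left hle
            rw [← e]; exact hs1.1
          · exfalso
            have h3 : v (k/2) = t := by simp only [hvdef]; exact min_eq_right hlt.le
            have h4 := hs1.2
            have h5 := hvt (k/2+1)
            have h6 := hs1.1
            rw [h3] at h6
            linarith
        · exact hs1.2.trans (min_le_left _ _)
      rw [hζrepr s ω]
      rw [Finset.sum_eq_single (⟨k/2, hj⟩ : Fin N)]
      · have hmem : s ∈ Set.Ioc (τ (⟨k/2, hj⟩ : Fin N).castSucc) (τ (⟨k/2, hj⟩ : Fin N).succ) := by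
          have e1 : τ ((⟨k/2, hj⟩ : Fin N).castSucc) = τ' (k/2) :=
            (hτ'eq (k/2) (by omega) (by omega)).symm
          have e2 : τ ((⟨k/2, hj⟩ : Fin N).succ) = τ' (k/2+1) :=
            (hτ'eq (k/2+1) (by omega) (by omega)).symm
          rw [e1, e2]; exact hs2
        rw [Set.indicator_of_mem hmem]
        ring
      · intro i _ hnei
        have hveq : (i : ℕ) ≠ k/2 := fun hcon => hnei (Fin.ext hcon)
        have hnotmem : s ∉ Set.Ioc (τ i.castSucc) (τ i.succ) := by
          intro hmem
          rcases Nat.lt_or_ge (i : ℕ) (k/2) with hlt | hge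
          · have e1 : τ i.succ ≤ τ' (k/2) := by
              rw [hτ'eq (k/2) (by omega) (by omega)]
              exact hτmono.monotone (by simp only [Fin.le_def, Fin.val_succ]; omega)
            exact absurd (hmem.2.trans e1) (not_le.2 hs2.1)
          · have hgt : k/2 < (i : ℕ) := lt_of_le_of_ne hge (Ne.symm hveq)
            have e1 : τ' (k/2+1) ≤ τ i.castSucc := by
              rw [hτ'eq (k/2+1) (by omega) (by omega)]
              exact hτmono.monotone (by simp only [Fin.le_def, Fin.coe_castSucc]; omega)
            exact absurd (hs2.2.trans e1) (not_le.2 hmem.1)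
        rw [Set.indicator_of_notMem hnotmem]
        ring
      · intro hnm; exact absurd (Finset.mem_univ _) hnm
    -- measurability of ζ and of the error process
    have hζmeas : Measurable (Function.uncurry ζ) := by
      have e : Function.uncurry ζ = fun p : ℝ × Ω => ∑ j, ξ j p.2 *
          Set.indicator (Set.Ioc (τ j.castSucc) (τ j.succ)) (fun _ => (1:ℝ)) p.1 :=
        funext fun p => hζrepr p.1 p.2
      rw [e]
      refine Finset.measurable_sum _ fun j _ => ?_
      exact ((hξmeas j).comp measurable_snd).mul
        ((measurable_const.indicator measurableSet_Ioc).comp measurable_fst)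
    have hζsec : ∀ ω, Measurable fun s => ζ s ω := fun ω =>
      hζmeas.comp (measurable_id.prodMk measurable_const)
    set G : Ω → ℝ≥0∞ := fun ω => ∫⁻ s in Set.Ioc (0:ℝ) T, ENNReal.ofReal |h s ω - ζ s ω|
      with hGdef
    have hGmeas : Measurable G := by
      have hm : Measurable fun p : ℝ × Ω =>
          ENNReal.ofReal |Function.uncurry h p - Function.uncurry ζ p| :=
        (hmeas.sub hζmeas).abs.ennreal_ofReal
      exact Measurable.lintegral_prod_left hm
    have hGle : ∀ P ∈ 𝔓, ∫⁻ ω, G ω ∂P ≤ M1norm 𝔓 T (fun u ω => h u ω - ζ u ω) := by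
      intro P hP
      unfold M1norm
      exact le_iSup (fun Q : 𝔓 => ∫⁻ ω, G ω ∂(Q : Measure Ω)) ⟨P, hP⟩
    -- pointwise bound
    have hpoint : ∀ ω, G ω ≠ ⊤ → G₀ ω ≠ ⊤ → ∀ c : ℕ → ℝ, (∀ k, |c k| ≤ 1) →
        (∀ j, c (2*j) + c (2*j+1) = 0) →
        (∑ k ∈ Finset.range (2*N), c k * (A (w (k+1)) ω - A (w k) ω)) ≤ (G ω).toReal := by
      intro ω hGω hG₀ω c hc1 hc2
      have hIh : IntegrableOn (fun s => h s ω) (Set.Ioc 0 T) volume := by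
        refine ⟨(hsec ω).aestronglyMeasurable, ?_⟩
        rw [hasFiniteIntegral_iff_norm]
        simpa [Real.norm_eq_abs] using hG₀ω.lt_top
      have hIhζ : IntegrableOn (fun s => h s ω - ζ s ω) (Set.Ioc 0 T) volume := by
        refine ⟨((hsec ω).sub (hζsec ω)).aestronglyMeasurable, ?_⟩
        rw [hasFiniteIntegral_iff_norm]
        simpa [Real.norm_eq_abs] using hGω.lt_top
      have hIζ : IntegrableOn (fun s => ζ s ω) (Set.Ioc 0 T) volume := by
        have e : (fun s => ζ s ω) = fun s => h s ω - (h s ω - ζ s ω) := by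
          funext s; ring
        rw [e]
        exact hIh.sub hIhζ
      have hII : ∀ (f : ℝ → ℝ), IntegrableOn f (Set.Ioc 0 T) volume →
          ∀ a b : ℝ, 0 ≤ a → a ≤ b → b ≤ T → IntervalIntegrable f volume a b :=
        fun f hf a b h0 hab hbT => (intervalIntegrable_iff_integrableOn_Ioc_of_le hab).2
          (hf.mono_set (Set.Ioc_subset_Ioc h0 hbT))
      have hΔ : ∀ k, A (w (k+1)) ω - A (w k) ω = ∫ s in (w k)..(w (k+1)), h s ω := by
        intro k
        rw [hA, hA]
        rw [← intervalIntegral.integral_add_adjacent_intervals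
          (hII _ hIh 0 (w k) le_rfl (hwIcc k).1 (hwIcc k).2)
          (hII _ hIh (w k) (w (k+1)) (hwIcc k).1 (hwmono (Nat.le_succ k)) (hwIcc (k+1)).2)]
        ring
      have hsplit : ∀ k, (∫ s in (w k)..(w (k+1)), h s ω)
          = (∫ s in (w k)..(w (k+1)), (h s ω - ζ s ω)) + ∫ s in (w k)..(w (k+1)), ζ s ω := by
        intro k
        rw [← intervalIntegral.integral_add
          (hII _ hIhζ (w k) (w (k+1)) (hwIcc k).1 (hwmono (Nat.le_succ k)) (hwIcc (k+1)).2)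
          (hII _ hIζ (w k) (w (k+1)) (hwIcc k).1 (hwmono (Nat.le_succ k)) (hwIcc (k+1)).2)]
        congr 1
        funext s
        ring
      have hZ : ∀ k, k < 2*N → ∀ (hj : k/2 < N),
          (∫ s in (w k)..(w (k+1)), ζ s ω) = ξ ⟨k/2, hj⟩ ω * (w (k+1) - w k) := by
        intro k hk hj
        rw [intervalIntegral.integral_of_le (hwmono (Nat.le_succ k))]
        rw [setIntegral_congr_fun measurableSet_Ioc
          (fun s hs => hζconst k hk hj ω s hs)]
        rw [setIntegral_const, Real.volume_real_Ioc_of_le (hwmono (Nat.le_succ k))]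
        rw [smul_eq_mul, mul_comm]
      -- the ζ part cancels
      have hζcancel : ∑ k ∈ Finset.range (2*N), c k * (∫ s in (w k)..(w (k+1)), ζ s ω) = 0 := by
        rw [sum_range_two_mul N (fun k => c k * (∫ s in (w k)..(w (k+1)), ζ s ω))]
        refine Finset.sum_eq_zero fun j hj => ?_
        have hjN : j < N := Finset.mem_range.1 hj
        have hj1 : (2*j)/2 < N := by omega
        have hj2 : (2*j+1)/2 < N := by omega
        rw [hZ (2*j) (by omega) hj1, hZ (2*j+1) (by omega) hj2]
        have hfe : (⟨(2*j)/2, hj1⟩ : Fin N) = ⟨(2*j+1)/2, hj2⟩ := Fin.ext (by simp; omega)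
        rw [hfe]
        have hlen : w (2*j+1) - w (2*j) = w (2*j+1+1) - w (2*j+1) := by
          have e1 := hw_even j
          have e2 := hw_odd j
          have e3 : w (2*j+1+1) = v (j+1) := by
            rw [(by omega : 2*j+1+1 = 2*(j+1))]
            exact hw_even (j+1)
          rw [e1, e2, e3]
          ring
        rw [← hlen]
        have hc' : c (2*j+1) = -(c (2*j)) := by linarith [hc2 j]
        rw [hc']
        ring
      calc ∑ k ∈ Finset.range (2*N), c k * (A (w (k+1)) ω - A (w k) ω)
          = ∑ k ∈ Finset.range (2*N), (c k * (∫ s in (w k)..(w (k+1)), (h s ω - ζ s ω))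
              + c k * (∫ s in (w k)..(w (k+1)), ζ s ω)) := by
            refine Finset.sum_congr rfl fun k _ => ?_
            rw [hΔ k, hsplit k]
            ring
        _ = (∑ k ∈ Finset.range (2*N), c k * (∫ s in (w k)..(w (k+1)), (h s ω - ζ s ω)))
            + ∑ k ∈ Finset.range (2*N), c k * (∫ s in (w k)..(w (k+1)), ζ s ω) :=
            Finset.sum_add_distrib
        _ = ∑ k ∈ Finset.range (2*N), c k * (∫ s in (w k)..(w (k+1)), (h s ω - ζ s ω)) := by
            rw [hζcancel, add_zero]
        _ ≤ ∑ k ∈ Finset.range (2*N), ∫ s in (w k)..(w (k+1)), |h s ω - ζ s ω| := by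
            refine Finset.sum_le_sum fun k _ => ?_
            have hab := hwmono (Nat.le_succ k)
            calc c k * (∫ s in (w k)..(w (k+1)), (h s ω - ζ s ω))
                ≤ |c k * (∫ s in (w k)..(w (k+1)), (h s ω - ζ s ω))| := le_abs_self _
              _ = |c k| * |∫ s in (w k)..(w (k+1)), (h s ω - ζ s ω)| := abs_mul _ _
              _ ≤ 1 * |∫ s in (w k)..(w (k+1)), (h s ω - ζ s ω)| :=
                  mul_le_mul_of_nonneg_right (hc1 k) (abs_nonneg _)
              _ = |∫ s in (w k)..(w (k+1)), (h s ω - ζ s ω)| := one_mul _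
              _ ≤ ∫ s in (w k)..(w (k+1)), |h s ω - ζ s ω| :=
                  intervalIntegral.abs_integral_le_integral_abs hab
        _ = ∫ s in (w 0)..(w (2*N)), |h s ω - ζ s ω| := by
            refine intervalIntegral.sum_integral_adjacent_intervals fun k _ => ?_
            exact (hII _ hIhζ (w k) (w (k+1)) (hwIcc k).1 (hwmono (Nat.le_succ k))
              (hwIcc (k+1)).2).abs
        _ ≤ ∫ s in (0:ℝ)..T, |h s ω - ζ s ω| := by
            rw [hw0, hw2N]
            exact intervalIntegral.integral_mono_interval le_rfl ht0 htT
              (Filter.Eventually.of_forall fun s => abs_nonneg _)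
              (hII _ hIhζ 0 T le_rfl hT.le le_rfl).abs
        _ = (G ω).toReal := by
            rw [intervalIntegral.integral_of_le hT.le,
              MeasureTheory.integral_eq_lintegral_of_nonneg_ae (f := fun s => |h s ω - ζ s ω|)
                (Filter.Eventually.of_forall fun s => abs_nonneg _)
                (((hsec ω).sub (hζsec ω)).abs.aestronglyMeasurable)]
    -- integral bound per measure
    have hbound : ∀ P ∈ 𝔓, ∀ c : ℕ → ℝ, (∀ k, |c k| ≤ 1) →
        (∀ j, c (2*j) + c (2*j+1) = 0) →
        ∫ ω, (∑ k ∈ Finset.range (2*N), c k * (A (w (k+1)) ω - A (w k) ω)) ∂P ≤ ε := by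
      intro P hP c hc1 hc2
      have _i : IsProbabilityMeasure P := hprob P hP
      have hGP : ∫⁻ ω, G ω ∂P < ENNReal.ofReal ε := (hGle P hP).trans_lt hζerr
      have hGPne : ∫⁻ ω, G ω ∂P ≠ ⊤ := (hGP.trans_le le_top).ne
      have haefinG : ∀ᵐ ω ∂P, G ω < ⊤ := ae_lt_top hGmeas hGPne
      have haefinG₀ : ∀ᵐ ω ∂P, G₀ ω < ⊤ := ae_lt_top hG₀meas ((hG₀le P hP).trans_lt hfin).ne
      have hGint : Integrable (fun ω => (G ω).toReal) P :=
        integrable_toReal_of_lintegral_ne_top hGmeas.aemeasurable hGPne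
      have hSint : Integrable
          (fun ω => ∑ k ∈ Finset.range (2*N), c k * (A (w (k+1)) ω - A (w k) ω)) P :=
        integrable_finset_sum _ fun k _ =>
          (((hAint _ (hwIcc (k+1)) P hP).sub (hAint _ (hwIcc k) P hP)).const_mul _)
      have h1 : ∫ ω, (∑ k ∈ Finset.range (2*N), c k * (A (w (k+1)) ω - A (w k) ω)) ∂P
          ≤ ∫ ω, (G ω).toReal ∂P := by
        refine integral_mono_ae hSint hGint ?_
        filter_upwards [haefinG, haefinG₀] with ω hω1 hω2
        exact hpoint ω hω1.ne hω2.ne c hc1 hc2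
      have h2 : ∫ ω, (G ω).toReal ∂P = (∫⁻ ω, G ω ∂P).toReal :=
        integral_toReal hGmeas.aemeasurable haefinG
      have h3 : (∫⁻ ω, G ω ∂P).toReal ≤ ε := by
        calc (∫⁻ ω, G ω ∂P).toReal ≤ (ENNReal.ofReal ε).toReal :=
              ENNReal.toReal_mono (by simp) hGP.le
          _ = ε := ENNReal.toReal_ofReal hε.le
      linarith
    -- additivity from independence
    have hE : ∀ σ : ℕ → ℝ,
        sublinearE 𝔓 (fun ω => ∑ k ∈ Finset.range (2*N),
          σ k * (A (w (k+1)) ω - A (w k) ω)) =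
        ∑ k ∈ Finset.range (2*N), sublinearE 𝔓 (fun ω =>
          σ k * (A (w (k+1)) ω - A (w k) ω)) := fun σ =>
      addEq h𝔓 hprob hAint hind hC₀ w hwmono hw0.ge (2*N) (hw2N ▸ htT) σ
    have htele : ∀ ω, ∑ k ∈ Finset.range (2*N),
        (1:ℝ) * (A (w (k+1)) ω - A (w k) ω) = A t ω := by
      intro ω
      simp only [one_mul]
      rw [Finset.sum_range_sub (fun k => A (w k) ω), hw2N, hw0]
      have e : A 0 ω = 0 := by rw [hA]; simp
      rw [e, sub_zero]
    have hteleneg : ∀ ω, ∑ k ∈ Finset.range (2*N),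
        (-1:ℝ) * (A (w (k+1)) ω - A (w k) ω) = -A t ω := by
      intro ω
      have e : ∀ k : ℕ, (-1:ℝ) * (A (w (k+1)) ω - A (w k) ω)
          = -((1:ℝ) * (A (w (k+1)) ω - A (w k) ω)) := fun k => by ring
      rw [Finset.sum_congr rfl fun k _ => e k, Finset.sum_neg_distrib, htele ω]
    set σp : ℕ → ℝ := fun k => (-1)^k with hσp
    set σm : ℕ → ℝ := fun k => -((-1)^k) with hσm
    have E1 := hE (fun _ => (1:ℝ))
    have E2 := hE (fun _ => (-1:ℝ))
    have E3 := hE σp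
    have E4 := hE σm
    rw [congrArg (sublinearE 𝔓) (funext htele)] at E1
    rw [congrArg (sublinearE 𝔓) (funext hteleneg)] at E2
    have hperk : ∀ k : ℕ,
        sublinearE 𝔓 (fun ω => σp k * (A (w (k+1)) ω - A (w k) ω))
        + sublinearE 𝔓 (fun ω => σm k * (A (w (k+1)) ω - A (w k) ω))
        = sublinearE 𝔓 (fun ω => (1:ℝ) * (A (w (k+1)) ω - A (w k) ω))
        + sublinearE 𝔓 (fun ω => (-1:ℝ) * (A (w (k+1)) ω - A (w k) ω)) := by
      intro k
      rcases Nat.even_or_odd k with hk | hk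
      · have e1 : σp k = 1 := by simp [hσp, hk.neg_one_pow]
        have e2 : σm k = -1 := by simp [hσm, hk.neg_one_pow]
        rw [e1, e2]
      · have e1 : σp k = -1 := by simp [hσp, hk.neg_one_pow]
        have e2 : σm k = 1 := by simp [hσm, hk.neg_one_pow]
        rw [e1, e2, add_comm]
    have habsp : ∀ k, |σp k| ≤ 1 := by
      intro k
      simp [hσp, abs_pow]
    have habsm : ∀ k, |σm k| ≤ 1 := by
      intro k
      simp [hσm, abs_pow]
    have hcp : ∀ j, σp (2*j) + σp (2*j+1) = 0 := by
      intro j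
      simp only [hσp, pow_succ, pow_mul]
      simp
    have hcm : ∀ j, σm (2*j) + σm (2*j+1) = 0 := by
      intro j
      have := hcp j
      simp only [hσm]
      simp only [hσp] at this
      linarith
    have hEp : sublinearE 𝔓 (fun ω => ∑ k ∈ Finset.range (2*N),
        σp k * (A (w (k+1)) ω - A (w k) ω)) ≤ ε :=
      subE_le h𝔓 fun P hP => hbound P hP σp habsp hcp
    have hEm : sublinearE 𝔓 (fun ω => ∑ k ∈ Finset.range (2*N),
        σm k * (A (w (k+1)) ω - A (w k) ω)) ≤ ε :=
      subE_le h𝔓 fun P hP => hbound P hP σm habsm hcm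
    have hfinal : sublinearE 𝔓 (A t) + sublinearE 𝔓 (fun ω => -A t ω)
        = sublinearE 𝔓 (fun ω => ∑ k ∈ Finset.range (2*N),
            σp k * (A (w (k+1)) ω - A (w k) ω))
        + sublinearE 𝔓 (fun ω => ∑ k ∈ Finset.range (2*N),
            σm k * (A (w (k+1)) ω - A (w k) ω)) := by
      calc sublinearE 𝔓 (A t) + sublinearE 𝔓 (fun ω => -A t ω)
          = (∑ k ∈ Finset.range (2*N), sublinearE 𝔓 (fun ω =>
              (1:ℝ) * (A (w (k+1)) ω - A (w k) ω)))
            + ∑ k ∈ Finset.range (2*N), sublinearE 𝔓 (fun ω =>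
              (-1:ℝ) * (A (w (k+1)) ω - A (w k) ω)) := by rw [← E1, ← E2]
        _ = ∑ k ∈ Finset.range (2*N), (sublinearE 𝔓 (fun ω =>
              (1:ℝ) * (A (w (k+1)) ω - A (w k) ω))
            + sublinearE 𝔓 (fun ω => (-1:ℝ) * (A (w (k+1)) ω - A (w k) ω))) :=
            Finset.sum_add_distrib.symm
        _ = ∑ k ∈ Finset.range (2*N), (sublinearE 𝔓 (fun ω =>
              σp k * (A (w (k+1)) ω - A (w k) ω))
            + sublinearE 𝔓 (fun ω => σm k * (A (w (k+1)) ω - A (w k) ω))) :=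
            Finset.sum_congr rfl fun k _ => (hperk k).symm
        _ = (∑ k ∈ Finset.range (2*N), sublinearE 𝔓 (fun ω =>
              σp k * (A (w (k+1)) ω - A (w k) ω)))
            + ∑ k ∈ Finset.range (2*N), sublinearE 𝔓 (fun ω =>
              σm k * (A (w (k+1)) ω - A (w k) ω)) := Finset.sum_add_distrib
        _ = _ := by rw [← E3, ← E4]
    rw [hfinal]
    linarith
  have hle : sublinearE 𝔓 (A t) + sublinearE 𝔓 (fun ω => -A t ω) ≤ 0 := by
    by_contra hpos
    push_neg at hpos
    have := hupper ((sublinearE 𝔓 (A t) + sublinearE 𝔓 (fun ω => -A t ω))/4) (by linarith)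
    linarith
  linarith
end
end
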